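/- arXiv:2409.13493 — 8 statements merged into one kernel-verified Lean document; each statement's English description precedes it below -/
import Mathlib

section
/- Let Ω be a nonempty compact metric space, f : Ω → Ω a homeomorphism, φ : Ω → ℝ^d a continuous map, and g : ℝ^d × ℝ^L → ℝ^L a continuous map for which there exists λ ∈ (0,1) with ‖g(u,y) − g(u,y')‖ ≤ λ‖y − y'‖ for all u ∈ ℝ^d and y, y' ∈ ℝ^L. Then there exists a unique continuous map Φ : Ω → ℝ^L satisfying Φ(f(ω)) = g(φ(ω), Φ(ω)) for every ω ∈ Ω. -/
/-!
Pulling back along `f`, an invariant graph is exactly a fixed point of the graph transform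
`Φ ↦ g ∘ (φ, Φ) ∘ f⁻¹` on the complete space `C(Ω, ℝ^L)` with the sup metric (complete because
`Ω` is compact). Fibrewise `λ`-contraction of `g` makes this transform a `λ`-contraction for the
sup metric, so the Banach fixed point theorem gives existence and uniqueness.
-/

namespace ContinuousMap

variable {Ω U E : Type*} [TopologicalSpace Ω] [TopologicalSpace U] [MetricSpace E]

def graphTransform (f : Ω ≃ₜ Ω) (φ : C(Ω, U)) (g : C(U × E, E)) (Φ : C(Ω, E)) : C(Ω, E) :=
  g.comp ((φ.prodMk Φ).comp f.symm)

@[simp]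
theorem graphTransform_apply (f : Ω ≃ₜ Ω) (φ : C(Ω, U)) (g : C(U × E, E)) (Φ : C(Ω, E))
    (ω : Ω) : graphTransform f φ g Φ ω = g (φ (f.symm ω), Φ (f.symm ω)) :=
  rfl

theorem graphTransform_eq_self_iff (f : Ω ≃ₜ Ω) (φ : C(Ω, U)) (g : C(U × E, E))
    (Φ : C(Ω, E)) : graphTransform f φ g Φ = Φ ↔ ∀ ω, Φ (f ω) = g (φ ω, Φ ω) := by
  rw [ContinuousMap.ext_iff, f.surjective.forall]
  simp only [graphTransform_apply, Homeomorph.symm_apply_apply, eq_comm]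

theorem lipschitzWith_graphTransform [CompactSpace Ω] (f : Ω ≃ₜ Ω) (φ : C(Ω, U))
    {g : C(U × E, E)} {K : NNReal} (hg : ∀ u, LipschitzWith K fun y => g (u, y)) :
    LipschitzWith K (graphTransform f φ g) := by
  refine LipschitzWith.of_dist_le_mul fun Φ Ψ => (dist_le (by positivity)).2 fun ω => ?_
  calc dist (graphTransform f φ g Φ ω) (graphTransform f φ g Ψ ω)
      ≤ K * dist (Φ (f.symm ω)) (Ψ (f.symm ω)) := (hg _).dist_le_mul _ _
    _ ≤ K * dist Φ Ψ := by gcongr; exact dist_apply_le_dist _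

theorem existsUnique_invariantGraph [CompactSpace Ω] [CompleteSpace E] [Nonempty E]
    (f : Ω ≃ₜ Ω) (φ : C(Ω, U)) {g : C(U × E, E)} {K : NNReal} (hK : K < 1)
    (hg : ∀ u, LipschitzWith K fun y => g (u, y)) :
    ∃! Φ : C(Ω, E), ∀ ω, Φ (f ω) = g (φ ω, Φ ω) := by
  have : Nonempty C(Ω, E) := ⟨const Ω (Classical.arbitrary E)⟩
  have hT : ContractingWith K (graphTransform f φ g) :=
    ⟨hK, lipschitzWith_graphTransform f φ hg⟩
  simp only [← graphTransform_eq_self_iff]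
  exact ⟨hT.fixedPoint, hT.fixedPoint_isFixedPt, fun Φ hΦ => hT.fixedPoint_unique hΦ⟩

end ContinuousMap

theorem invariant_graph_exists_unique_general
    {Ω : Type*} [MetricSpace Ω] [CompactSpace Ω]
    {d L : ℕ} (f : Ω ≃ₜ Ω)
    (φ : Ω → EuclideanSpace ℝ (Fin d)) (hφ : Continuous φ)
    (g : EuclideanSpace ℝ (Fin d) × EuclideanSpace ℝ (Fin L) → EuclideanSpace ℝ (Fin L))
    (hg : Continuous g)
    (lam : ℝ) (hlam : lam ∈ Set.Ioo (0 : ℝ) 1)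
    (hcontr : ∀ (u : EuclideanSpace ℝ (Fin d)) (y y' : EuclideanSpace ℝ (Fin L)),
      ‖g (u, y) - g (u, y')‖ ≤ lam * ‖y - y'‖) :
    ∃! Φ : Ω → EuclideanSpace ℝ (Fin L),
      Continuous Φ ∧ ∀ ω : Ω, Φ (f ω) = g (φ ω, Φ ω) := by
  obtain ⟨hlam₀, hlam₁⟩ := hlam
  have hlip : ∀ u, LipschitzWith lam.toNNReal fun y => g (u, y) := fun u =>
    LipschitzWith.of_dist_le_mul fun y y' => by
      simpa only [dist_eq_norm, Real.coe_toNNReal _ hlam₀.le] using hcontr u y y'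
  obtain ⟨Φ, hΦ, hunique⟩ := ContinuousMap.existsUnique_invariantGraph (g := ⟨g, hg⟩) f
    ⟨φ, hφ⟩ (Real.toNNReal_lt_one.2 hlam₁) hlip
  exact ⟨Φ, ⟨Φ.continuous, hΦ⟩, fun Ψ ⟨hΨc, hΨ⟩ =>
    congrArg DFunLike.coe (hunique ⟨Ψ, hΨc⟩ hΨ)⟩

/-- **Existence and uniqueness of the invariant graph (echo-state network) map.**
If `g` is a uniform `λ`-contraction (`λ < 1`) in its second variable, the driven system
`y_{n+1} = g(φ(ω_n), y_n)` over the base homeomorphism `f` admits a unique continuous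
map `Φ : Ω → ℝ^L` with `Φ ∘ f = g ∘ (φ, Φ)`. -/
theorem invariant_graph_exists_unique
    {Ω : Type*} [MetricSpace Ω] [CompactSpace Ω] [Nonempty Ω]
    {d L : ℕ} (f : Ω ≃ₜ Ω)
    (φ : Ω → EuclideanSpace ℝ (Fin d)) (hφ : Continuous φ)
    (g : EuclideanSpace ℝ (Fin d) × EuclideanSpace ℝ (Fin L) → EuclideanSpace ℝ (Fin L))
    (hg : Continuous g)
    (lam : ℝ) (hlam : lam ∈ Set.Ioo (0 : ℝ) 1)
    (hcontr : ∀ (u : EuclideanSpace ℝ (Fin d)) (y y' : EuclideanSpace ℝ (Fin L)),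
      ‖g (u, y) - g (u, y')‖ ≤ lam * ‖y - y'‖) :
    ∃! Φ : Ω → EuclideanSpace ℝ (Fin L),
      Continuous Φ ∧ ∀ ω : Ω, Φ (f ω) = g (φ ω, Φ ω) :=
  invariant_graph_exists_unique_general f φ hφ g hg lam hlam hcontr
end

section
/- Let Ω be a compact metric space, f : Ω → Ω a continuous map, and μ an f-invariant Borel probability measure on Ω. For a continuous map A : Ω → GL(d, ℝ) define λ₁(A) := inf_{n ≥ 1} (1/n) ∫_Ω log ‖A(f^{n−1}ω) ⋯ A(f(ω)) A(ω)‖ dμ(ω), where ‖·‖ is the operator norm. Then λ₁ is upper semicontinuous with respect to uniform convergence: for every continuous A : Ω → GL(d, ℝ) and every ε > 0 there is δ > 0 such that every continuous B : Ω → GL(d, ℝ) with sup_{ω ∈ Ω} ‖B(ω) − A(ω)‖ < δ satisfies λ₁(B) < λ₁(A) + ε. -/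
/-!
Write `A⁽ⁿ⁾` for `cocycle f A n`. Each term `n⁻¹ ∫ log ‖A⁽ⁿ⁾‖ dμ` of the infimum defining `λ₁`
depends continuously on the generator: if `‖B - A‖ ≤ δ ≤ 1` uniformly and `M ≥ 1` bounds `‖A‖`,
telescoping gives `‖B⁽ⁿ⁾ - A⁽ⁿ⁾‖ ≤ n (M + 1)ⁿ δ`, while `‖A⁽ⁿ⁾‖ ≥ K⁻ⁿ` for a bound `K` of `‖A⁻¹‖`
on the compact base; hence `log ‖B⁽ⁿ⁾‖ ≤ log ‖A⁽ⁿ⁾‖ + n (M + 1)ⁿ Kⁿ δ` pointwise. An infimum of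
continuous functions is upper semicontinuous: choose `n` whose term is within `ε / 2` of `λ₁(A)`
and perturb that single term. The same lower bound `‖B⁽ⁿ⁾‖ ≥ K_B⁻ⁿ` makes the terms for `B`
bounded below; otherwise the real infimum `λ₁(B)` would be the junk value `0`.
-/

open Filter Topology MeasureTheory

/-- The matrix cocycle over `f` generated by `A` (matrices realized as continuous linear
endomorphisms of `ℝ^d`): `cocycle f A n ω = A (f^{n-1} ω) ⋯ A (f ω) A ω`. -/
noncomputable def cocycle {Ω : Type*} {E : Type*} [NormedAddCommGroup E] [NormedSpace ℝ E]
    (f : Ω → Ω) (A : Ω → E →L[ℝ] E) : ℕ → Ω → (E →L[ℝ] E)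
  | 0, _ => 1
  | (n + 1), ω => cocycle f A n (f ω) * A ω

/-- The top Lyapunov exponent of the cocycle generated by `A` over `(Ω, f, μ)`, defined via
subadditivity as `inf_{n ≥ 1} (1/n) ∫ log ‖A(f^{n-1} ω) ⋯ A(ω)‖ dμ(ω)`. -/
noncomputable def lyap1 {Ω : Type*} [MeasurableSpace Ω] (μ : Measure Ω) (f : Ω → Ω)
    {E : Type*} [NormedAddCommGroup E] [NormedSpace ℝ E]
    (A : Ω → E →L[ℝ] E) : ℝ :=
  ⨅ n : {k : ℕ // 0 < k}, ((n : ℕ) : ℝ)⁻¹ * ∫ ω, Real.log ‖cocycle f A (n : ℕ) ω‖ ∂μ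

lemma Real.log_le_log_add_sub_div {a b : ℝ} (ha : 0 < a) (hb : 0 < b) :
    Real.log b ≤ Real.log a + (b - a) / a := by
  have h := Real.log_le_sub_one_of_pos (div_pos hb ha)
  rw [Real.log_div hb.ne' ha.ne', div_sub_one ha.ne'] at h
  linarith

lemma Continuous.exists_one_le_forall_norm_le {Ω F : Type*} [TopologicalSpace Ω] [CompactSpace Ω]
    [SeminormedAddGroup F] {g : Ω → F} (hg : Continuous g) : ∃ C, 1 ≤ C ∧ ∀ ω, ‖g ω‖ ≤ C := by
  obtain ⟨C, hC⟩ := isCompact_univ.exists_bound_of_continuousOn hg.continuousOn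
  exact ⟨max C 1, le_max_right _ _, fun ω => (hC ω trivial).trans (le_max_left _ _)⟩

lemma Continuous.ringInverse {Ω R : Type*} [TopologicalSpace Ω] [NormedRing R]
    [HasSummableGeomSeries R] {g : Ω → R} (hg : Continuous g) (hu : ∀ ω, IsUnit (g ω)) :
    Continuous fun ω => Ring.inverse (g ω) :=
  continuous_iff_continuousAt.2 fun ω =>
    ((hu ω).unit_spec ▸ NormedRing.inverse_continuousAt (hu ω).unit).comp hg.continuousAt

section Cocycle

variable {Ω E : Type*} [NormedAddCommGroup E] [NormedSpace ℝ E] {f : Ω → Ω}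
  {A B : Ω → E →L[ℝ] E}

lemma cocycle_succ (n : ℕ) (ω : Ω) : cocycle f A (n + 1) ω = cocycle f A n (f ω) * A ω := rfl

lemma continuous_cocycle [TopologicalSpace Ω] (hf : Continuous f) (hA : Continuous A) (n : ℕ) :
    Continuous (cocycle f A n) := by
  induction n with
  | zero => exact continuous_const
  | succ n ih => exact (ih.comp hf).mul hA

lemma isUnit_cocycle (hA : ∀ ω, IsUnit (A ω)) (n : ℕ) (ω : Ω) : IsUnit (cocycle f A n ω) := by
  induction n generalizing ω with
  | zero => exact isUnit_one
  | succ n ih => exact (ih (f ω)).mul (hA ω)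

lemma norm_cocycle_le {M : ℝ} (hA : ∀ ω, ‖A ω‖ ≤ M) (n : ℕ) (ω : Ω) :
    ‖cocycle f A n ω‖ ≤ M ^ n := by
  induction n generalizing ω with
  | zero => exact ContinuousLinearMap.norm_id_le
  | succ n ih =>
    rw [cocycle_succ, pow_succ]
    exact (norm_mul_le _ _).trans
      (mul_le_mul (ih (f ω)) (hA ω) (norm_nonneg _) ((norm_nonneg _).trans (ih (f ω))))

lemma norm_cocycle_sub_cocycle_le {M δ : ℝ} (hM : 1 ≤ M) (hA : ∀ ω, ‖A ω‖ ≤ M)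
    (hB : ∀ ω, ‖B ω‖ ≤ M) (hAB : ∀ ω, ‖B ω - A ω‖ ≤ δ) (n : ℕ) (ω : Ω) :
    ‖cocycle f B n ω - cocycle f A n ω‖ ≤ n * M ^ n * δ := by
  induction n generalizing ω with
  | zero => simp [cocycle]
  | succ n ih =>
    have hδ : 0 ≤ δ := (norm_nonneg _).trans (hAB ω)
    have hMn : M ^ n ≤ M ^ (n + 1) := pow_le_pow_right₀ hM n.le_succ
    have htelescope : cocycle f B (n + 1) ω - cocycle f A (n + 1) ω
        = cocycle f B n (f ω) * (B ω - A ω)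
          + (cocycle f B n (f ω) - cocycle f A n (f ω)) * A ω := by
      rw [cocycle_succ, cocycle_succ]; noncomm_ring
    calc ‖cocycle f B (n + 1) ω - cocycle f A (n + 1) ω‖
        ≤ ‖cocycle f B n (f ω)‖ * ‖B ω - A ω‖
          + ‖cocycle f B n (f ω) - cocycle f A n (f ω)‖ * ‖A ω‖ := by
          rw [htelescope]
          exact (norm_add_le _ _).trans (add_le_add (norm_mul_le _ _) (norm_mul_le _ _))
      _ ≤ M ^ n * δ + n * M ^ n * δ * M := by
          gcongr
          · exact norm_cocycle_le hB n (f ω)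
          · exact hAB ω
          · exact ih (f ω)
          · exact hA ω
      _ ≤ (n + 1 : ℕ) * M ^ (n + 1) * δ := by
          rw [pow_succ] at hMn ⊢
          push_cast
          nlinarith [mul_le_mul_of_nonneg_right hMn hδ]

lemma one_le_pow_mul_norm_cocycle [Nontrivial E] {K : ℝ} (hA : ∀ ω, IsUnit (A ω))
    (hK : ∀ ω, ‖Ring.inverse (A ω)‖ ≤ K) (n : ℕ) (ω : Ω) :
    1 ≤ K ^ n * ‖cocycle f A n ω‖ := by
  induction n generalizing ω with
  | zero => simp [cocycle]
  | succ n ih =>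
    have hK0 : 0 ≤ K := (norm_nonneg _).trans (hK ω)
    have hcancel : cocycle f A (n + 1) ω * Ring.inverse (A ω) = cocycle f A n (f ω) := by
      rw [cocycle_succ, mul_assoc, Ring.mul_inverse_cancel _ (hA ω), mul_one]
    calc (1 : ℝ) ≤ K ^ n * ‖cocycle f A n (f ω)‖ := ih (f ω)
      _ ≤ K ^ n * (‖cocycle f A (n + 1) ω‖ * K) := by
          rw [← hcancel]
          gcongr
          exact (norm_mul_le _ _).trans (mul_le_mul_of_nonneg_left (hK ω) (norm_nonneg _))
      _ = K ^ (n + 1) * ‖cocycle f A (n + 1) ω‖ := by ring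

lemma neg_mul_log_le_log_norm_cocycle [Nontrivial E] {K : ℝ} (hA : ∀ ω, IsUnit (A ω))
    (hK : ∀ ω, ‖Ring.inverse (A ω)‖ ≤ K) (n : ℕ) (ω : Ω) :
    -(n * Real.log K) ≤ Real.log ‖cocycle f A n ω‖ := by
  have h := one_le_pow_mul_norm_cocycle (f := f) hA hK n ω
  have hpos := zero_lt_one.trans_le h
  have hKn : 0 < K ^ n := pos_of_mul_pos_left hpos (norm_nonneg _)
  have hc : 0 < ‖cocycle f A n ω‖ := pos_of_mul_pos_right hpos hKn.le
  have hlog := Real.log_le_log one_pos h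
  rw [Real.log_one, Real.log_mul hKn.ne' hc.ne', Real.log_pow] at hlog
  linarith

lemma continuous_log_norm_cocycle [TopologicalSpace Ω] [Nontrivial E] (hf : Continuous f)
    (hA : Continuous A) (hAu : ∀ ω, IsUnit (A ω)) (n : ℕ) :
    Continuous fun ω => Real.log ‖cocycle f A n ω‖ :=
  (continuous_cocycle hf hA n).norm.log fun ω => norm_ne_zero_iff.2 (isUnit_cocycle hAu n ω).ne_zero

end Cocycle

lemma exists_pos_forall_log_norm_cocycle_le {Ω E : Type*} [TopologicalSpace Ω] [CompactSpace Ω]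
    [NormedAddCommGroup E] [NormedSpace ℝ E] [CompleteSpace E] [Nontrivial E] {f : Ω → Ω}
    {A : Ω → E →L[ℝ] E} (hA : Continuous A) (hAu : ∀ ω, IsUnit (A ω)) (n : ℕ) {ε : ℝ}
    (hε : 0 < ε) :
    ∃ δ > 0, ∀ B : Ω → E →L[ℝ] E, (∀ ω, IsUnit (B ω)) → (∀ ω, ‖B ω - A ω‖ < δ) →
      ∀ ω, Real.log ‖cocycle f B n ω‖ ≤ Real.log ‖cocycle f A n ω‖ + ε := by
  obtain ⟨M, hM, hAM⟩ := hA.exists_one_le_forall_norm_le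
  obtain ⟨K, hK, hAK⟩ := (hA.ringInverse hAu).exists_one_le_forall_norm_le
  set c : ℝ := n * (M + 1) ^ n * K ^ n
  set δ := min 1 (ε / (c + 1))
  have hδ1 : δ ≤ 1 := min_le_left _ _
  have hcδ : c * δ ≤ ε := by
    calc c * δ ≤ c * (ε / (c + 1)) := by gcongr; exact min_le_right _ _
      _ ≤ (c + 1) * (ε / (c + 1)) := by gcongr; linarith
      _ = ε := mul_div_cancel₀ _ (by positivity)
  refine ⟨δ, lt_min one_pos (by positivity), fun B hBu hAB ω => ?_⟩
  have hBM : ∀ ω, ‖B ω‖ ≤ M + 1 := fun ω => by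
    linarith [norm_sub_norm_le (B ω) (A ω), hAB ω, hAM ω]
  have hdist := norm_cocycle_sub_cocycle_le (f := f) (by linarith)
    (fun ω => (hAM ω).trans (by linarith)) hBM (fun ω => (hAB ω).le) n ω
  have hKa := one_le_pow_mul_norm_cocycle (f := f) hAu hAK n ω
  set a := ‖cocycle f A n ω‖
  set r := n * (M + 1) ^ n * δ
  have hr : 0 ≤ r := by positivity
  have ha : 0 < a := pos_of_mul_pos_right (zero_lt_one.trans_le hKa) (by positivity)
  have hb : 0 < ‖cocycle f B n ω‖ := norm_pos_iff.2 (isUnit_cocycle hBu n ω).ne_zero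
  calc Real.log ‖cocycle f B n ω‖ ≤ Real.log a + (‖cocycle f B n ω‖ - a) / a :=
        Real.log_le_log_add_sub_div ha hb
    _ ≤ Real.log a + r / a := by
        gcongr
        exact (norm_sub_norm_le _ _).trans hdist
    _ ≤ Real.log a + r * K ^ n := by
        gcongr
        rw [div_le_iff₀ ha]
        nlinarith
    _ ≤ Real.log a + ε := by
        have : r * K ^ n = c * δ := by ring
        linarith

noncomputable def lyapTerm {Ω E : Type*} [MeasurableSpace Ω] [NormedAddCommGroup E]
    [NormedSpace ℝ E] (μ : Measure Ω) (f : Ω → Ω) (A : Ω → E →L[ℝ] E) (n : ℕ) : ℝ :=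
  (n : ℝ)⁻¹ * ∫ ω, Real.log ‖cocycle f A n ω‖ ∂μ

section LyapunovTerm

variable {Ω E : Type*} [TopologicalSpace Ω] [CompactSpace Ω] [MeasurableSpace Ω]
  [OpensMeasurableSpace Ω] [NormedAddCommGroup E] [NormedSpace ℝ E] [Nontrivial E]
  (μ : Measure Ω) [IsProbabilityMeasure μ] {f : Ω → Ω} {A : Ω → E →L[ℝ] E}

lemma integrable_log_norm_cocycle (hf : Continuous f) (hA : Continuous A)
    (hAu : ∀ ω, IsUnit (A ω)) (n : ℕ) :
    Integrable (fun ω => Real.log ‖cocycle f A n ω‖) μ :=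
  (continuous_log_norm_cocycle hf hA hAu n).integrable_of_hasCompactSupport
    (HasCompactSupport.of_compactSpace _)

lemma bddBelow_lyapTerm [CompleteSpace E] (hf : Continuous f) (hA : Continuous A)
    (hAu : ∀ ω, IsUnit (A ω)) :
    BddBelow (Set.range fun n : {k : ℕ // 0 < k} => lyapTerm μ f A n) := by
  obtain ⟨K, -, hAK⟩ := (hA.ringInverse hAu).exists_one_le_forall_norm_le
  refine ⟨-Real.log K, ?_⟩
  rintro _ ⟨⟨n, hn⟩, rfl⟩
  have hint : -(n * Real.log K) ≤ ∫ ω, Real.log ‖cocycle f A n ω‖ ∂μ := by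
    simpa using integral_mono (integrable_const _) (integrable_log_norm_cocycle μ hf hA hAu n)
      (neg_mul_log_le_log_norm_cocycle hAu hAK n)
  have hn' : (0 : ℝ) < n := Nat.cast_pos.2 hn
  calc -Real.log K = (n : ℝ)⁻¹ * -(n * Real.log K) := by field_simp
    _ ≤ lyapTerm μ f A n := by unfold lyapTerm; gcongr

lemma lyap1_le_lyapTerm [CompleteSpace E] (hf : Continuous f) (hA : Continuous A)
    (hAu : ∀ ω, IsUnit (A ω)) {n : ℕ} (hn : 0 < n) : lyap1 μ f A ≤ lyapTerm μ f A n :=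
  ciInf_le (bddBelow_lyapTerm μ hf hA hAu) ⟨n, hn⟩

lemma exists_pos_forall_lyapTerm_le [CompleteSpace E] (hf : Continuous f) (hA : Continuous A)
    (hAu : ∀ ω, IsUnit (A ω)) {n : ℕ} (hn : 0 < n) {ε : ℝ} (hε : 0 < ε) :
    ∃ δ > 0, ∀ B : Ω → E →L[ℝ] E, Continuous B → (∀ ω, IsUnit (B ω)) →
      (∀ ω, ‖B ω - A ω‖ < δ) → lyapTerm μ f B n ≤ lyapTerm μ f A n + ε := by
  obtain ⟨δ, hδ, hlog⟩ := exists_pos_forall_log_norm_cocycle_le (f := f) hA hAu n hε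
  refine ⟨δ, hδ, fun B hB hBu hAB => ?_⟩
  have hint : ∫ ω, Real.log ‖cocycle f B n ω‖ ∂μ ≤ ∫ ω, Real.log ‖cocycle f A n ω‖ ∂μ + ε := by
    have hAint := integrable_log_norm_cocycle μ hf hA hAu n
    simpa [integral_add hAint (integrable_const ε)] using
      integral_mono (integrable_log_norm_cocycle μ hf hB hBu n) (hAint.add (integrable_const ε))
        (hlog B hBu hAB)
  have hn' : (n : ℝ)⁻¹ ≤ 1 := inv_le_one_of_one_le₀ (Nat.one_le_cast.2 hn)
  calc lyapTerm μ f B n ≤ (n : ℝ)⁻¹ * (∫ ω, Real.log ‖cocycle f A n ω‖ ∂μ + ε) := by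
        unfold lyapTerm; gcongr
    _ ≤ lyapTerm μ f A n + ε := by
        unfold lyapTerm
        rw [mul_add]
        gcongr
        exact mul_le_of_le_one_left hε.le hn'

end LyapunovTerm

theorem lyap1_upperSemicontinuous_general
    {Ω : Type*} [MetricSpace Ω] [CompactSpace Ω] [MeasurableSpace Ω] [BorelSpace Ω]
    {d : ℕ} (f : Ω → Ω) (hf : Continuous f)
    (μ : Measure Ω) [IsProbabilityMeasure μ]
    (A : Ω → EuclideanSpace ℝ (Fin d) →L[ℝ] EuclideanSpace ℝ (Fin d))
    (hA : Continuous A) (hAinv : ∀ ω, IsUnit (A ω))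
    (ε : ℝ) (hε : 0 < ε) :
    ∃ δ > (0 : ℝ), ∀ B : Ω → EuclideanSpace ℝ (Fin d) →L[ℝ] EuclideanSpace ℝ (Fin d),
      Continuous B → (∀ ω, IsUnit (B ω)) → (⨆ ω, ‖B ω - A ω‖) < δ →
      lyap1 μ f B < lyap1 μ f A + ε := by
  cases subsingleton_or_nontrivial (EuclideanSpace ℝ (Fin d))
  · refine ⟨1, one_pos, fun B _ _ _ => ?_⟩
    rw [Subsingleton.elim B A]
    linarith
  obtain ⟨⟨n, hn⟩, hnA⟩ : ∃ n : {k : ℕ // 0 < k}, lyapTerm μ f A n < lyap1 μ f A + ε / 2 :=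
    exists_lt_of_ciInf_lt (lt_add_of_pos_right _ (half_pos hε))
  obtain ⟨δ, hδ, hterm⟩ := exists_pos_forall_lyapTerm_le μ hf hA hAinv hn (half_pos hε)
  refine ⟨δ, hδ, fun B hB hBu hsup => ?_⟩
  have hAB : ∀ ω, ‖B ω - A ω‖ < δ := fun ω =>
    (le_ciSup (isCompact_range (hB.sub hA).norm).bddAbove ω).trans_lt hsup
  calc lyap1 μ f B ≤ lyapTerm μ f B n := lyap1_le_lyapTerm μ hf hB hBu hn
    _ ≤ lyapTerm μ f A n + ε / 2 := hterm B hB hBu hAB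
    _ < lyap1 μ f A + ε := by linarith

/-- **Upper semicontinuity of the top Lyapunov exponent.**
For a continuous `GL(d, ℝ)`-valued generator `A` over a compact base with an invariant Borel
probability measure, the top Lyapunov exponent `lyap1` is upper semicontinuous with respect
to uniform perturbations of the generator. -/
theorem lyap1_upperSemicontinuous
    {Ω : Type*} [MetricSpace Ω] [CompactSpace Ω] [MeasurableSpace Ω] [BorelSpace Ω]
    {d : ℕ} (f : Ω → Ω) (hf : Continuous f)
    (μ : Measure Ω) [IsProbabilityMeasure μ] (hμ : MeasurePreserving f μ μ)
    (A : Ω → EuclideanSpace ℝ (Fin d) →L[ℝ] EuclideanSpace ℝ (Fin d))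
    (hA : Continuous A) (hAinv : ∀ ω, IsUnit (A ω))
    (ε : ℝ) (hε : 0 < ε) :
    ∃ δ > (0 : ℝ), ∀ B : Ω → EuclideanSpace ℝ (Fin d) →L[ℝ] EuclideanSpace ℝ (Fin d),
      Continuous B → (∀ ω, IsUnit (B ω)) → (⨆ ω, ‖B ω - A ω‖) < δ →
      lyap1 μ f B < lyap1 μ f A + ε :=
  lyap1_upperSemicontinuous_general f hf μ A hA hAinv ε hε
end

section
/- Let Ψ : ℝ × ℝ^m → ℝ^m be a C² flow (Ψ(0, ·) = id and Ψ(s, Ψ(t, x)) = Ψ(s+t, x)), let Ω ⊆ ℝ^m be a nonempty compact set invariant under the flow, and let φ : ℝ^m → ℝ^d be a C² map. Then there exists a constant C₂ > 0, depending only on Ψ, φ and Ω, such that for every Q ∈ ℕ with Q ≥ 1, every Δt > 0 with QΔt ≤ 1, every ω ∈ Ω and every v ∈ ℝ^m: ‖Dφ(ω)v‖ ≤ (1/Q) ∑_{j=0}^{Q−1} ‖Dφ(Ψ(jΔt, ω)) (D_x Ψ(jΔt, ω) v)‖ + (C₂/2) Q Δt ‖v‖. -/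
/-!
With `F = φ ∘ Ψ`, the identity `Ψ(0, ·) = id` gives `Dφ(ω) = ∂ₓF(0, ω)`, and by the chain rule the
`j`-th summand is `‖∂ₓF(jΔt, ω) v‖`. Since `F` is `C²`, its second derivative is bounded on the
compact set `[0, 1] × Ω`, so `t ↦ ∂ₓF(t, ω)` is `C₂`-Lipschitz on `[0, 1]` uniformly in `ω ∈ Ω`.
Each summand is therefore at least `‖Dφ(ω) v‖ - C₂ jΔt ‖v‖`, and averaging over `j < Q` costs
`C₂ Δt ‖v‖ (Q - 1) / 2 ≤ (C₂ / 2) Q Δt ‖v‖`.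
-/

section

variable {E F G : Type*} [NormedAddCommGroup E] [NormedSpace ℝ E]
  [NormedAddCommGroup F] [NormedSpace ℝ F] [NormedAddCommGroup G] [NormedSpace ℝ G]

theorem IsCompact.exists_norm_fderiv_sub_le_of_segment_subset {f : E → F}
    (hf : ContDiff ℝ 2 f) {K : Set E} (hK : IsCompact K) :
    ∃ C > (0 : ℝ), ∀ x y, segment ℝ x y ⊆ K → ‖fderiv ℝ f y - fderiv ℝ f x‖ ≤ C * ‖y - x‖ := by
  have hf' : ContDiff ℝ 1 (fderiv ℝ f) := hf.fderiv_right (by norm_num)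
  obtain ⟨M, hM⟩ := hK.exists_bound_of_continuousOn (hf'.continuous_fderiv one_ne_zero).continuousOn
  refine ⟨max M 0 + 1, by positivity, fun x y hxy => ?_⟩
  exact (convex_segment x y).norm_image_sub_le_of_norm_fderiv_le
    (fun z _ => (hf'.differentiable one_ne_zero).differentiableAt)
    (fun z hz => (hM z (hxy hz)).trans (by linarith [le_max_left M 0]))
    (left_mem_segment ℝ x y) (right_mem_segment ℝ x y)

theorem fderiv_comp_prodMk_right {f : E × F → G} {e : E} {x : F}
    (hf : DifferentiableAt ℝ f (e, x)) :
    fderiv ℝ (fun y => f (e, y)) x = (fderiv ℝ f (e, x)).comp (ContinuousLinearMap.inr ℝ E F) :=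
  (hf.hasFDerivAt.comp x (hasFDerivAt_prodMk_right e x)).fderiv

theorem exists_norm_fderiv_slice_sub_le {f : ℝ × E → F} (hf : ContDiff ℝ 2 f)
    {Ω : Set E} (hΩ : IsCompact Ω) (a b : ℝ) :
    ∃ C > (0 : ℝ), ∀ x ∈ Ω, ∀ s ∈ Set.Icc a b, ∀ t ∈ Set.Icc a b,
      ‖fderiv ℝ (fun y => f (t, y)) x - fderiv ℝ (fun y => f (s, y)) x‖ ≤ C * |t - s| := by
  obtain ⟨C, hC, hCf⟩ :=
    (isCompact_Icc (a := a) (b := b)).prod hΩ |>.exists_norm_fderiv_sub_le_of_segment_subset hf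
  refine ⟨C, hC, fun x hx s hs t ht => ?_⟩
  have hfd : Differentiable ℝ f := hf.differentiable two_ne_zero
  have hseg : segment ℝ (s, x) (t, x) ⊆ Set.Icc a b ×ˢ Ω :=
    ((convex_Icc a b).prod (convex_singleton x)).segment_subset (Set.mk_mem_prod hs rfl)
      (Set.mk_mem_prod ht rfl) |>.trans (Set.prod_mono le_rfl (by simpa using hx))
  calc ‖fderiv ℝ (fun y => f (t, y)) x - fderiv ℝ (fun y => f (s, y)) x‖
      = ‖(fderiv ℝ f (t, x) - fderiv ℝ f (s, x)).comp (ContinuousLinearMap.inr ℝ ℝ E)‖ := by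
        rw [fderiv_comp_prodMk_right (hfd _), fderiv_comp_prodMk_right (hfd _),
          ContinuousLinearMap.sub_comp]
    _ ≤ ‖fderiv ℝ f (t, x) - fderiv ℝ f (s, x)‖ * 1 :=
        (ContinuousLinearMap.opNorm_comp_le _ _).trans
          (by gcongr; exact ContinuousLinearMap.norm_inr_le_one ℝ ℝ E)
    _ ≤ C * |t - s| := by
        simpa [Prod.norm_def, ← Prod.mk_sub_mk] using hCf _ _ hseg

end

theorem le_average_add_of_le_add_mul {a c : ℝ} {b : ℕ → ℝ} {Q : ℕ} (hQ : 1 ≤ Q) (hc : 0 ≤ c)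
    (h : ∀ j < Q, a ≤ b j + c * j) :
    a ≤ (Q : ℝ)⁻¹ * ∑ j ∈ Finset.range Q, b j + c / 2 * Q := by
  have hQpos : (0 : ℝ) < Q := by exact_mod_cast hQ
  have hgauss : (∑ j ∈ Finset.range Q, (j : ℝ)) * 2 = Q * (Q - 1) := by
    rw [← Nat.cast_pred hQ, ← Nat.cast_sum, ← Nat.cast_ofNat, ← Nat.cast_mul, ← Nat.cast_mul,
      Finset.sum_range_id_mul_two]
  have hsum : Q * a ≤ ∑ j ∈ Finset.range Q, b j + c * ∑ j ∈ Finset.range Q, (j : ℝ) := by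
    simpa [Finset.sum_add_distrib, Finset.mul_sum] using
      Finset.sum_le_sum fun j hj => h j (Finset.mem_range.mp hj)
  rw [← mul_le_mul_iff_right₀ hQpos, mul_add, mul_inv_cancel_left₀ hQpos.ne']
  nlinarith

theorem delay_coordinate_sensitivity_bound_general
    {m d : ℕ}
    (Ψ : ℝ × EuclideanSpace ℝ (Fin m) → EuclideanSpace ℝ (Fin m))
    (hΨ : ContDiff ℝ 2 Ψ)
    (hΨ0 : ∀ x, Ψ (0, x) = x)
    (Ω : Set (EuclideanSpace ℝ (Fin m))) (hΩc : IsCompact Ω)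
    (φ : EuclideanSpace ℝ (Fin m) → EuclideanSpace ℝ (Fin d)) (hφ : ContDiff ℝ 2 φ) :
    ∃ C₂ > (0 : ℝ), ∀ (Q : ℕ), 1 ≤ Q → ∀ Δt : ℝ, 0 < Δt → (Q : ℝ) * Δt ≤ 1 →
      ∀ ω ∈ Ω, ∀ v : EuclideanSpace ℝ (Fin m),
        ‖fderiv ℝ φ ω v‖ ≤
          (Q : ℝ)⁻¹ * ∑ j ∈ Finset.range Q,
              ‖fderiv ℝ φ (Ψ ((j : ℝ) * Δt, ω))
                (fderiv ℝ (fun x => Ψ ((j : ℝ) * Δt, x)) ω v)‖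
            + C₂ / 2 * (Q : ℝ) * Δt * ‖v‖ := by
  obtain ⟨C, hC, hCF⟩ := exists_norm_fderiv_slice_sub_le (hφ.comp hΨ) hΩc 0 1
  refine ⟨C, hC, fun Q hQ Δt hΔt hQΔt ω hω v => ?_⟩
  set D : ℝ → _ := fun t => fderiv ℝ (fun x => φ (Ψ (t, x))) ω
  have hchain (t : ℝ) : fderiv ℝ φ (Ψ (t, ω)) (fderiv ℝ (fun x => Ψ (t, x)) ω v) = D t v := by
    have hΨt : DifferentiableAt ℝ (fun x => Ψ (t, x)) ω :=
      ((hΨ.differentiable two_ne_zero).comp (differentiable_const t |>.prodMk differentiable_id)) ω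
    exact congr($(fderiv_comp ω (hφ.differentiable two_ne_zero _) hΨt) v).symm
  have hD0 : D 0 = fderiv ℝ φ ω := by simp only [D, hΨ0]
  have hterm : ∀ j < Q, ‖fderiv ℝ φ ω v‖ ≤
      ‖fderiv ℝ φ (Ψ ((j : ℝ) * Δt, ω)) (fderiv ℝ (fun x => Ψ ((j : ℝ) * Δt, x)) ω v)‖
        + C * Δt * ‖v‖ * j := by
    intro j hj
    have hjt : (j : ℝ) * Δt ∈ Set.Icc (0 : ℝ) 1 := ⟨by positivity,
      (mul_le_mul_of_nonneg_right (by exact_mod_cast hj.le) hΔt.le).trans hQΔt⟩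
    rw [hchain, ← hD0]
    calc ‖D 0 v‖ ≤ ‖D (j * Δt) v‖ + ‖(D 0 - D (j * Δt)) v‖ := norm_le_insert' _ _
      _ ≤ ‖D (j * Δt) v‖ + ‖D 0 - D (j * Δt)‖ * ‖v‖ := by
        gcongr; exact ContinuousLinearMap.le_opNorm _ _
      _ ≤ ‖D (j * Δt) v‖ + C * |0 - j * Δt| * ‖v‖ := by
        gcongr; exact hCF ω hω _ hjt 0 ⟨le_rfl, zero_le_one⟩
      _ = ‖D (j * Δt) v‖ + C * Δt * ‖v‖ * j := by
        rw [zero_sub, abs_neg, abs_of_nonneg hjt.1]; ring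
  convert le_average_add_of_le_add_mul hQ (by positivity) hterm using 2
  ring

/-- **Sensitivity bound for delay-coordinate reconstructions.**
For a `C²` flow `Ψ` with compact invariant set `Ω` and a `C²` observation `φ`, there is a
constant `C₂ > 0` (depending only on `Ψ`, `φ` and `Ω`) such that for all `Q ≥ 1` and
`Δt > 0` with `QΔt ≤ 1`, every `ω ∈ Ω` and `v`:
`‖Dφ(ω)v‖ ≤ (1/Q) ∑_{j<Q} ‖Dφ(Ψ(jΔt, ω)) (D_x Ψ(jΔt, ω) v)‖ + (C₂/2) Q Δt ‖v‖`. -/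
theorem delay_coordinate_sensitivity_bound
    {m d : ℕ}
    (Ψ : ℝ × EuclideanSpace ℝ (Fin m) → EuclideanSpace ℝ (Fin m))
    (hΨ : ContDiff ℝ 2 Ψ)
    (hΨ0 : ∀ x, Ψ (0, x) = x)
    (hΨgrp : ∀ (s t : ℝ) (x : EuclideanSpace ℝ (Fin m)), Ψ (s, Ψ (t, x)) = Ψ (s + t, x))
    (Ω : Set (EuclideanSpace ℝ (Fin m))) (hΩc : IsCompact Ω) (hΩne : Ω.Nonempty)
    (hΩinv : ∀ (t : ℝ), ∀ ω ∈ Ω, Ψ (t, ω) ∈ Ω)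
    (φ : EuclideanSpace ℝ (Fin m) → EuclideanSpace ℝ (Fin d)) (hφ : ContDiff ℝ 2 φ) :
    ∃ C₂ > (0 : ℝ), ∀ (Q : ℕ), 1 ≤ Q → ∀ Δt : ℝ, 0 < Δt → (Q : ℝ) * Δt ≤ 1 →
      ∀ ω ∈ Ω, ∀ v : EuclideanSpace ℝ (Fin m),
        ‖fderiv ℝ φ ω v‖ ≤
          (Q : ℝ)⁻¹ * ∑ j ∈ Finset.range Q,
              ‖fderiv ℝ φ (Ψ ((j : ℝ) * Δt, ω))
                (fderiv ℝ (fun x => Ψ ((j : ℝ) * Δt, x)) ω v)‖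
            + C₂ / 2 * (Q : ℝ) * Δt * ‖v‖ :=
  delay_coordinate_sensitivity_bound_general Ψ hΨ hΨ0 Ω hΩc φ hφ
end

section
/- Let (Ω, μ) be a probability space and f : Ω → Ω an invertible measure-preserving transformation (f is bimeasurable and both f and f⁻¹ preserve μ). Let U be the unitary Koopman operator on L²(μ; ℂ) given by Uψ = ψ∘f, and let D be the closure in L²(μ; ℂ) of the linear span of all eigenfunctions of U. Then for every φ ∈ L²(μ; ℂ) and every ε > 0 there exist a finite-dimensional subspace W of L²(μ; ℂ) containing the constant functions and a set S ⊆ ℕ of natural density 1 such that for every n ∈ S, | ‖U^n φ − π_W U^n φ‖ − ‖φ − P_D φ‖ | ≤ ε, where π_W and P_D denote the orthogonal projections onto W and D respectively. -/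
/-!
Write `φ = v + r + w`, where `v` is a finite combination of eigenfunctions with
`‖r‖ = ‖P_D φ - v‖ < ε` and `w = φ - P_D φ ∈ Dᗮ`. Let `W` be spanned by the constants and the
eigenfunctions occurring in `v`. Then `W` is `U`-invariant, and since `U` is an isometry each
`Uⁿ w` stays orthogonal to every eigenfunction, hence to `W`. The forecast error at time `n` is
therefore `‖Uⁿ w + π_{Wᗮ} Uⁿ r‖`, which differs from `‖Uⁿ w‖ = ‖w‖` by at most `‖r‖ < ε`,
for every `n`, so `S = ℕ` will do.
-/

open MeasureTheory Filter Topology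

/-- A set `S ⊆ ℕ` has natural density one. -/
def hasDensityOne (S : Set ℕ) : Prop :=
  Tendsto (fun N : ℕ =>
    (∑ n ∈ Finset.range N, S.indicator (fun _ => (1 : ℝ)) n) / (N : ℝ)) atTop (𝓝 1)

theorem hasDensityOne_univ : hasDensityOne Set.univ := by
  refine tendsto_const_nhds.congr' ?_
  filter_upwards [eventually_ne_atTop 0] with N hN
  simp [hN]

section Eigenvectors

variable {R M : Type*} [Semiring R] [AddCommMonoid M] [Module R M] [TopologicalSpace M]

def eigenvectors (T : M →L[R] M) : Set M := {ψ | ψ ≠ 0 ∧ ∃ c : R, T ψ = c • ψ}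

theorem pow_apply_eq_pow_smul {T : M →L[R] M} {c : R} {ψ : M} (h : T ψ = c • ψ) (n : ℕ) :
    (T ^ n) ψ = c ^ n • ψ := by
  induction n with
  | zero => simp
  | succ n ih => rw [pow_succ', mul_apply_eq_comp, ih, map_smul, h, smul_smul, pow_succ]

theorem pow_apply_mem_span_of_subset_eigenvectors {T : M →L[R] M} {G : Set M}
    (hG : G ⊆ eigenvectors T) (n : ℕ) {x : M} (hx : x ∈ Submodule.span R G) :
    (T ^ n) x ∈ Submodule.span R G := by
  suffices Submodule.span R G ≤ (Submodule.span R G).comap (T ^ n).toLinearMap from this hx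
  rw [Submodule.span_le]
  intro ψ hψ
  obtain ⟨-, c, hc⟩ := hG hψ
  rw [SetLike.mem_coe, Submodule.mem_comap, ContinuousLinearMap.coe_coe, pow_apply_eq_pow_smul hc]
  exact Submodule.smul_mem _ _ (Submodule.subset_span hψ)

end Eigenvectors

section Isometry

variable {𝕜 E : Type*} [RCLike 𝕜] [NormedAddCommGroup E] [InnerProductSpace 𝕜 E]
  {T : E →L[𝕜] E}

theorem norm_pow_apply_of_norm_map (hT : ∀ x, ‖T x‖ = ‖x‖) (n : ℕ) (x : E) :
    ‖(T ^ n) x‖ = ‖x‖ := by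
  induction n with
  | zero => simp
  | succ n ih => rw [pow_succ', mul_apply_eq_comp, hT, ih]

theorem inner_pow_apply_of_norm_map (hT : ∀ x, ‖T x‖ = ‖x‖) (n : ℕ) (x y : E) :
    inner 𝕜 ((T ^ n) x) ((T ^ n) y) = inner 𝕜 x y :=
  (LinearMap.norm_map_iff_inner_map_map (T ^ n)).mp (norm_pow_apply_of_norm_map hT n) x y

theorem inner_pow_apply_eq_zero_of_mem_eigenvectors (hT : ∀ x, ‖T x‖ = ‖x‖) {ψ w : E}
    (hψ : ψ ∈ eigenvectors T) (hw : inner 𝕜 ψ w = 0) (n : ℕ) :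
    inner 𝕜 ψ ((T ^ n) w) = 0 := by
  obtain ⟨hψ0, c, hc⟩ := hψ
  have hc0 : c ≠ 0 := by
    rintro rfl
    exact hψ0 (norm_eq_zero.mp (by rw [← hT, hc, zero_smul, norm_zero]))
  have := inner_pow_apply_of_norm_map hT n ψ w
  rw [pow_apply_eq_pow_smul hc, inner_smul_left, hw] at this
  exact (mul_eq_zero.mp this).resolve_left (by simpa using pow_ne_zero n hc0)

theorem pow_apply_mem_orthogonal_span (hT : ∀ x, ‖T x‖ = ‖x‖) {G : Set E}
    (hG : G ⊆ eigenvectors T) {w : E} (hw : ∀ ψ ∈ G, inner 𝕜 ψ w = 0) (n : ℕ) :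
    (T ^ n) w ∈ (Submodule.span 𝕜 G)ᗮ := by
  have : Submodule.span 𝕜 G ≤ (𝕜 ∙ (T ^ n) w)ᗮ := by
    rw [Submodule.span_le]
    intro ψ hψ
    exact Submodule.mem_orthogonal_singleton_iff_inner_left.mpr
      (inner_pow_apply_eq_zero_of_mem_eigenvectors hT (hG hψ) (hw ψ hψ) n)
  exact Submodule.orthogonal_le this
    (Submodule.le_orthogonal_orthogonal _ (Submodule.mem_span_singleton_self _))

end Isometry

theorem Submodule.abs_norm_sub_starProjection_sub_norm_le {𝕜 E : Type*} [RCLike 𝕜]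
    [NormedAddCommGroup E] [InnerProductSpace 𝕜 E] (K : Submodule 𝕜 E)
    [K.HasOrthogonalProjection] {x a b c : E} (ha : a ∈ K) (hc : c ∈ Kᗮ) (hx : x = a + b + c) :
    |‖x - K.starProjection x‖ - ‖c‖| ≤ ‖b‖ := by
  have hdecomp : x - K.starProjection x = Kᗮ.starProjection b + c := by
    rw [← starProjection_orthogonal_val, hx, map_add, map_add,
      Kᗮ.starProjection_eq_self_iff.mpr hc,
      Kᗮ.starProjection_apply_eq_zero_iff.mpr (K.le_orthogonal_orthogonal ha), zero_add]
  rw [hdecomp]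
  calc |‖Kᗮ.starProjection b + c‖ - ‖c‖| ≤ ‖Kᗮ.starProjection b‖ := by
        simpa using abs_norm_sub_norm_le (Kᗮ.starProjection b + c) c
    _ ≤ ‖b‖ := Kᗮ.norm_starProjection_apply_le b

section Koopman

variable {α E : Type*} [MeasurableSpace α] {μ : Measure α} [NormedAddCommGroup E]
  {p : ENNReal} {f : α → α} {U : Lp E p μ → Lp E p μ}

theorem norm_koopman_apply (hf : MeasurePreserving f μ μ)
    (hU : ∀ ψ : Lp E p μ, (U ψ : α → E) =ᵐ[μ] fun ω => ψ (f ω)) (ψ : Lp E p μ) :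
    ‖U ψ‖ = ‖ψ‖ := by
  have : U ψ = Lp.compMeasurePreserving f hf ψ :=
    Lp.ext ((hU ψ).trans (Lp.coeFn_compMeasurePreserving ψ hf).symm)
  rw [this, Lp.norm_compMeasurePreserving]

theorem koopman_apply_const [IsFiniteMeasure μ] (hf : Measure.QuasiMeasurePreserving f μ μ)
    (hU : ∀ ψ : Lp E p μ, (U ψ : α → E) =ᵐ[μ] fun ω => ψ (f ω)) (c : E) :
    U (Lp.const p μ c) = Lp.const p μ c :=
  Lp.ext ((hU _).trans ((hf.ae_eq_comp (Lp.coeFn_const p μ c)).trans (Lp.coeFn_const p μ c).symm))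

end Koopman

theorem Lp.const_ne_zero {α E : Type*} [MeasurableSpace α] {μ : Measure α}
    [IsFiniteMeasure μ] [NeZero μ] [NormedAddCommGroup E] {p : ENNReal} (hp : p ≠ 0) {c : E}
    (hc : c ≠ 0) : Lp.const p μ c ≠ 0 := by
  intro h
  have := congrArg norm h
  rw [Lp.norm_const p μ c hp, Lp.norm_zero] at this
  exact mul_ne_zero (norm_ne_zero_iff.mpr hc)
    (Real.rpow_pos_of_pos measureReal_univ_pos _).ne' this

theorem direct_forecast_error_large_hypothesis_space_general
    {Ω : Type*} [MeasurableSpace Ω] (μ : Measure Ω) [IsProbabilityMeasure μ]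
    (f : Ω ≃ᵐ Ω) (hf : MeasurePreserving f μ μ)
    (U : Lp ℂ 2 μ →L[ℂ] Lp ℂ 2 μ)
    (hU : ∀ ψ : Lp ℂ 2 μ, (U ψ : Ω → ℂ) =ᵐ[μ] fun ω => ψ (f ω))
    (φ : Lp ℂ 2 μ) (ε : ℝ) (hε : 0 < ε) :
    ∃ W : Submodule ℂ (Lp ℂ 2 μ), ∃ _ : FiniteDimensional ℂ W,
      (MemLp.toLp (fun _ => (1 : ℂ)) (memLp_const 1)) ∈ W ∧
      ∃ S : Set ℕ, hasDensityOne S ∧ ∀ n ∈ S,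
        |‖(U ^ n) φ - (Submodule.orthogonalProjectionOnto W ((U ^ n) φ) : Lp ℂ 2 μ)‖ -
          ‖φ - (Submodule.orthogonalProjectionOnto
              ((Submodule.span ℂ
                {ψ : Lp ℂ 2 μ | ψ ≠ 0 ∧ ∃ c : ℂ, U ψ = c • ψ}).topologicalClosure) φ :
            Lp ℂ 2 μ)‖| ≤ ε := by
  set D := (Submodule.span ℂ (eigenvectors U)).topologicalClosure
  have hU_norm : ∀ ψ, ‖U ψ‖ = ‖ψ‖ := norm_koopman_apply hf hU
  have hone : Lp.const 2 μ (1 : ℂ) ∈ eigenvectors U :=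
    ⟨Lp.const_ne_zero two_ne_zero one_ne_zero, 1,
      by rw [one_smul, koopman_apply_const hf.quasiMeasurePreserving hU]⟩
  obtain ⟨v, hv, hPv⟩ :
      ∃ v ∈ Submodule.span ℂ (eigenvectors U), dist (D.starProjection φ) v < ε :=
    Metric.mem_closure_iff.mp (D.starProjection_apply_mem φ) ε hε
  obtain ⟨t, ht, hvt⟩ := Submodule.mem_span_finite_of_mem_span hv
  have hG : insert (Lp.const 2 μ 1) (t : Set (Lp ℂ 2 μ)) ⊆ eigenvectors U :=
    Set.insert_subset hone ht
  set W := Submodule.span ℂ (insert (Lp.const 2 μ 1) (t : Set (Lp ℂ 2 μ)))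
  have hW : FiniteDimensional ℂ W := FiniteDimensional.span_of_finite ℂ (t.finite_toSet.insert _)
  refine ⟨W, hW, Submodule.subset_span (Set.mem_insert _ _), Set.univ, hasDensityOne_univ,
    fun n _ => ?_⟩
  have hvW : (U ^ n) v ∈ W := pow_apply_mem_span_of_subset_eigenvectors hG n
    (Submodule.span_mono (Set.subset_insert _ _) hvt)
  have hwW : (U ^ n) (φ - D.starProjection φ) ∈ Wᗮ :=
    pow_apply_mem_orthogonal_span hU_norm hG (fun ψ hψ => D.sub_starProjection_mem_orthogonal φ ψ
      (Submodule.le_topologicalClosure _ (Submodule.subset_span (hG hψ)))) n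
  have hφ : (U ^ n) φ = (U ^ n) v + (U ^ n) (D.starProjection φ - v) +
      (U ^ n) (φ - D.starProjection φ) := by
    rw [← map_add, ← map_add]
    congr 1
    abel
  calc |‖(U ^ n) φ - W.starProjection ((U ^ n) φ)‖ - ‖φ - D.starProjection φ‖|
      = |‖(U ^ n) φ - W.starProjection ((U ^ n) φ)‖ - ‖(U ^ n) (φ - D.starProjection φ)‖| := by
        rw [norm_pow_apply_of_norm_map hU_norm n (φ - D.starProjection φ)]
    _ ≤ ‖(U ^ n) (D.starProjection φ - v)‖ := W.abs_norm_sub_starProjection_sub_norm_le hvW hwW hφ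
    _ = ‖D.starProjection φ - v‖ := norm_pow_apply_of_norm_map hU_norm n _
    _ ≤ ε := by rw [← dist_eq_norm]; exact hPv.le

/-- **Asymptotic error of the direct forecast.**
Let `U` be the unitary Koopman operator `Uψ = ψ ∘ f` of an invertible measure-preserving
transformation `f` of a probability space, and let `D` be the closure of the span of all
eigenfunctions of `U`.  For every `φ ∈ L²(μ; ℂ)` and `ε > 0` there is a finite-dimensional
hypothesis space `W` containing the constants and a set `S ⊆ ℕ` of density one along which
the direct-forecast error `‖U^n φ - π_W U^n φ‖` is within `ε` of `‖φ - P_D φ‖`. -/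
theorem direct_forecast_error_large_hypothesis_space
    {Ω : Type*} [MeasurableSpace Ω] (μ : Measure Ω) [IsProbabilityMeasure μ]
    (f : Ω ≃ᵐ Ω) (hf : MeasurePreserving f μ μ) (hf' : MeasurePreserving f.symm μ μ)
    (U : Lp ℂ 2 μ →L[ℂ] Lp ℂ 2 μ)
    (hU : ∀ ψ : Lp ℂ 2 μ, (U ψ : Ω → ℂ) =ᵐ[μ] fun ω => ψ (f ω))
    (φ : Lp ℂ 2 μ) (ε : ℝ) (hε : 0 < ε) :
    ∃ W : Submodule ℂ (Lp ℂ 2 μ), ∃ _ : FiniteDimensional ℂ W,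
      (MemLp.toLp (fun _ => (1 : ℂ)) (memLp_const 1)) ∈ W ∧
      ∃ S : Set ℕ, hasDensityOne S ∧ ∀ n ∈ S,
        |‖(U ^ n) φ - (Submodule.orthogonalProjectionOnto W ((U ^ n) φ) : Lp ℂ 2 μ)‖ -
          ‖φ - (Submodule.orthogonalProjectionOnto
              ((Submodule.span ℂ
                {ψ : Lp ℂ 2 μ | ψ ≠ 0 ∧ ∃ c : ℂ, U ψ = c • ψ}).topologicalClosure) φ :
            Lp ℂ 2 μ)‖| ≤ ε :=
  direct_forecast_error_large_hypothesis_space_general μ f hf U hU φ ε hε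
end

section
/- Let (Ω, μ) be a probability space and f : Ω → Ω a measure-preserving transformation that is weakly mixing in the sense that for all α, β ∈ L²(μ; ℂ), (1/N) ∑_{n=0}^{N−1} | ⟨α∘f^n, β⟩ − (∫α dμ)(conj ∫β dμ) | → 0 as N → ∞. Let U be the Koopman operator Uψ = ψ∘f on L²(μ; ℂ), let W be a finite-dimensional subspace of L²(μ; ℂ) containing the constant functions, and let π_W be the orthogonal projection onto W. Then for every φ ∈ L²(μ; ℂ) there exists a set S ⊆ ℕ of natural density 1 such that lim_{n ∈ S, n → ∞} ‖U^n φ − π_W U^n φ‖ = ‖φ − ∫φ dμ‖_{L²(μ)}. -/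
open MeasureTheory Filter Topology

/-!
Write `φ₀ = φ - ∫ φ`. Since `U` fixes the constants and `W` contains them,
`U^n φ - π_W U^n φ = U^n φ₀ - π_W U^n φ₀`, and as `U` is an isometry Pythagoras gives
`‖U^n φ₀ - π_W U^n φ₀‖² = ‖φ₀‖² - ‖π_W U^n φ₀‖²`. Expanding `π_W` in an orthonormal basis of
`W`, weak mixing makes the Cesàro means of `‖π_W U^n φ₀‖²` tend to zero, and the
Koopman–von Neumann lemma turns Cesàro convergence to zero of a nonnegative sequence into
convergence along a set of density one.
-/

open Finset InnerProductSpace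

noncomputable def cesaroMean (a : ℕ → ℝ) (N : ℕ) : ℝ := (∑ n ∈ range N, a n) / N

def hasDensityZero (E : Set ℕ) : Prop :=
  Tendsto (cesaroMean (E.indicator fun _ => 1)) atTop (𝓝 0)

section Cesaro

variable {a b : ℕ → ℝ} {N : ℕ}

lemma cesaroMean_nonneg (ha : ∀ n, 0 ≤ a n) : 0 ≤ cesaroMean a N :=
  div_nonneg (sum_nonneg fun n _ => ha n) N.cast_nonneg

lemma cesaroMean_mono (h : ∀ n < N, a n ≤ b n) : cesaroMean a N ≤ cesaroMean b N :=
  div_le_div_of_nonneg_right (sum_le_sum fun n hn => h n (mem_range.1 hn)) N.cast_nonneg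

lemma cesaroMean_const_mul (c : ℝ) : cesaroMean (fun n => c * a n) N = c * cesaroMean a N := by
  simp only [cesaroMean, ← mul_sum, mul_div_assoc]

lemma cesaroMean_sum {ι : Type*} (s : Finset ι) (g : ι → ℕ → ℝ) :
    cesaroMean (fun n => ∑ i ∈ s, g i n) N = ∑ i ∈ s, cesaroMean (g i) N := by
  simp only [cesaroMean, sum_comm (s := range N), sum_div]

lemma tendsto_cesaroMean_sum_zero {ι : Type*} (s : Finset ι) {g : ι → ℕ → ℝ}
    (hg : ∀ i ∈ s, Tendsto (cesaroMean (g i)) atTop (𝓝 0)) :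
    Tendsto (cesaroMean fun n => ∑ i ∈ s, g i n) atTop (𝓝 0) := by
  simpa only [← cesaroMean_sum, sum_const_zero] using tendsto_finsetSum s hg

lemma cesaroMean_indicator_le {E F : Set ℕ} (h : ∀ n < N, n ∈ E → n ∈ F) :
    cesaroMean (E.indicator fun _ => 1) N ≤ cesaroMean (F.indicator fun _ => 1) N :=
  cesaroMean_mono fun n hn => Set.indicator_apply_le'
    (fun hE => (Set.indicator_of_mem (h n hn hE) (fun _ => (1 : ℝ))).ge)
    fun _ => Set.indicator_nonneg (fun _ _ => zero_le_one) n

lemma cesaroMean_indicator_compl (S : Set ℕ) (hN : N ≠ 0) :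
    cesaroMean (Sᶜ.indicator fun _ => 1) N = 1 - cesaroMean (S.indicator fun _ => 1) N := by
  simp only [cesaroMean, Set.indicator_compl, Pi.sub_apply, sum_sub_distrib, sum_const,
    card_range, nsmul_eq_mul, mul_one, sub_div, div_self (Nat.cast_ne_zero.2 hN : (N : ℝ) ≠ 0)]

end Cesaro

lemma hasDensityOne_of_hasDensityZero_compl {S : Set ℕ} (h : hasDensityZero Sᶜ) :
    hasDensityOne S := by
  have : Tendsto (fun N => 1 - cesaroMean (Sᶜ.indicator fun _ => 1) N) atTop (𝓝 1) := by
    simpa using (tendsto_const_nhds (x := (1 : ℝ))).sub h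
  refine this.congr' ?_
  filter_upwards [eventually_ne_atTop 0] with N hN
  rw [cesaroMean_indicator_compl S hN, sub_sub_cancel]
  rfl

lemma hasDensityZero_setOf_le {a : ℕ → ℝ} (ha : ∀ n, 0 ≤ a n)
    (hc : Tendsto (cesaroMean a) atTop (𝓝 0)) {ε : ℝ} (hε : 0 < ε) :
    hasDensityZero {n | ε ≤ a n} := by
  refine squeeze_zero (fun N => cesaroMean_nonneg fun n => Set.indicator_nonneg
    (fun _ _ => zero_le_one) n) (fun N => ?_) (by simpa using hc.const_mul ε⁻¹)
  rw [← cesaroMean_const_mul]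
  refine cesaroMean_mono fun n _ => ?_
  by_cases hn : ε ≤ a n
  · rw [Set.indicator_of_mem (s := {n | ε ≤ a n}) hn, le_inv_mul_iff₀ hε, mul_one]
    exact hn
  · rw [Set.indicator_of_notMem (s := {n | ε ≤ a n}) hn]
    exact mul_nonneg (inv_nonneg.2 hε.le) (ha n)

lemma exists_hasDensityZero_eventually_superset {A : ℕ → Set ℕ} (hA : Monotone A)
    (h : ∀ k, hasDensityZero (A k)) :
    ∃ E, hasDensityZero E ∧ ∀ k, ∀ᶠ n in atTop, n ∈ A k → n ∈ E := by
  have hT : ∀ k : ℕ, ∃ T, k ≤ T ∧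
      ∀ M ≥ T, cesaroMean ((A k).indicator fun _ => 1) M < 1 / (k + 1) := by
    intro k
    obtain ⟨T, hT⟩ := eventually_atTop.1 ((h k).eventually_lt_const Nat.one_div_pos_of_nat)
    exact ⟨max k T, le_max_left _ _, fun M hM => hT M (le_of_max_le_right hM)⟩
  choose T hkT hT using hT
  refine ⟨{n | ∃ k, T k ≤ n ∧ n ∈ A k}, ?_,
    fun k => eventually_atTop.2 ⟨T k, fun n hn hnA => ⟨k, hn, hnA⟩⟩⟩
  refine tendsto_order.2 ⟨fun l hl => Eventually.of_forall fun M => hl.trans_le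
    (cesaroMean_nonneg fun n => Set.indicator_nonneg (fun _ _ => zero_le_one) n), fun ε hε => ?_⟩
  obtain ⟨k₀, hk₀⟩ := exists_nat_one_div_lt hε
  filter_upwards [eventually_ge_atTop (T k₀)] with M hM
  -- below `M`, `E` lies in `A j` for the last `j` with `T j ≤ M`, as `A` is monotone
  set j := Nat.findGreatest (fun k => T k ≤ M) M
  have hle_j : ∀ k, T k ≤ M → k ≤ j := fun k hk => Nat.le_findGreatest ((hkT k).trans hk) hk
  calc cesaroMean ({n | ∃ k, T k ≤ n ∧ n ∈ A k}.indicator fun _ => 1) M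
      ≤ cesaroMean ((A j).indicator fun _ => 1) M := cesaroMean_indicator_le
        fun n hn ⟨k, hkn, hnk⟩ => hA (hle_j k (hkn.trans hn.le)) hnk
    _ < 1 / (j + 1) := hT j M (Nat.findGreatest_spec (P := fun k => T k ≤ M) ((hkT k₀).trans hM) hM)
    _ ≤ 1 / (k₀ + 1) := Nat.one_div_le_one_div (hle_j k₀ hM)
    _ < ε := hk₀

/-- The Koopman–von Neumann lemma. -/
lemma exists_hasDensityOne_tendsto_zero {a : ℕ → ℝ} (ha : ∀ n, 0 ≤ a n)
    (hc : Tendsto (cesaroMean a) atTop (𝓝 0)) :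
    ∃ S, hasDensityOne S ∧ Tendsto a (atTop ⊓ 𝓟 S) (𝓝 0) := by
  obtain ⟨E, hE, hAE⟩ := exists_hasDensityZero_eventually_superset
    (A := fun k : ℕ => {n | 1 / ((k : ℝ) + 1) ≤ a n})
    (fun k j hkj => Set.ofPred_subset_ofPred.2 fun n => (Nat.one_div_le_one_div hkj).trans)
    (fun k => hasDensityZero_setOf_le ha hc (by positivity))
  refine ⟨Eᶜ, hasDensityOne_of_hasDensityZero_compl (by rwa [compl_compl]),
    tendsto_order.2 ⟨fun l hl => Eventually.of_forall fun n => hl.trans_le (ha n),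
      fun ε hε => ?_⟩⟩
  obtain ⟨k, hk⟩ := exists_nat_one_div_lt hε
  rw [eventually_inf_principal]
  filter_upwards [hAE k] with n hn hnE
  exact (not_le.1 fun h => hnE (hn h)).trans hk

section Projection

variable {𝕜 E : Type*} [RCLike 𝕜] [NormedAddCommGroup E] [InnerProductSpace 𝕜 E]
  (K : Submodule 𝕜 E)

lemma norm_sub_orthogonalProjectionOnto_sq [K.HasOrthogonalProjection] (x : E) :
    ‖x - K.orthogonalProjectionOnto x‖ ^ 2 = ‖x‖ ^ 2 - ‖K.orthogonalProjectionOnto x‖ ^ 2 := by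
  rw [K.norm_sq_eq_add_norm_sq_projection x, Submodule.orthogonalProjectionOnto_orthogonal,
    add_sub_cancel_left]
  rfl

lemma sub_orthogonalProjectionOnto_add_of_mem [K.HasOrthogonalProjection] (x : E) {v : E}
    (hv : v ∈ K) :
    x + v - K.orthogonalProjectionOnto (x + v) = x - K.orthogonalProjectionOnto x := by
  have hPv : (K.orthogonalProjectionOnto v : E) = v := K.starProjection_eq_self_iff.2 hv
  rw [map_add, Submodule.coe_add, hPv]
  abel

lemma tendsto_cesaroMean_norm_sq_orthogonalProjectionOnto [FiniteDimensional 𝕜 K] {y : ℕ → E}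
    {C : ℝ} (hy : ∀ n, ‖y n‖ ≤ C)
    (h : ∀ w ∈ K, Tendsto (cesaroMean fun n => ‖⟪w, y n⟫_𝕜‖) atTop (𝓝 0)) :
    Tendsto (cesaroMean fun n => ‖K.orthogonalProjectionOnto (y n)‖ ^ 2) atTop (𝓝 0) := by
  set b := stdOrthonormalBasis 𝕜 K
  have hbound : ∀ n, ‖K.orthogonalProjectionOnto (y n)‖ ^ 2 ≤ ∑ i, C * ‖⟪(b i : E), y n⟫_𝕜‖ := by
    intro n
    rw [← b.sum_sq_norm_inner_right]
    refine sum_le_sum fun i _ => ?_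
    rw [Submodule.inner_orthogonalProjectionOnto_eq_of_mem_left, sq]
    refine mul_le_mul_of_nonneg_right ?_ (norm_nonneg _)
    calc ‖⟪(b i : E), y n⟫_𝕜‖ ≤ ‖(b i : E)‖ * ‖y n‖ := norm_inner_le_norm _ _
      _ ≤ C := by rw [← Submodule.coe_norm, b.orthonormal.1 i, one_mul]; exact hy n
  refine squeeze_zero (fun N => cesaroMean_nonneg fun n => sq_nonneg _)
    (fun N => cesaroMean_mono fun n _ => hbound n) (tendsto_cesaroMean_sum_zero _ fun i _ => ?_)
  have hC := (h _ (b i).2).const_mul C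
  rw [mul_zero] at hC
  exact hC.congr fun N => (cesaroMean_const_mul C).symm

lemma exists_hasDensityOne_tendsto_norm_sub_orthogonalProjectionOnto [FiniteDimensional 𝕜 K]
    {y : ℕ → E} {r : ℝ} (hy : ∀ n, ‖y n‖ = r)
    (h : ∀ w ∈ K, Tendsto (cesaroMean fun n => ‖⟪w, y n⟫_𝕜‖) atTop (𝓝 0)) :
    ∃ S, hasDensityOne S ∧
      Tendsto (fun n => ‖y n - K.orthogonalProjectionOnto (y n)‖) (atTop ⊓ 𝓟 S) (𝓝 r) := by
  obtain ⟨S, hS, hlim⟩ := exists_hasDensityOne_tendsto_zero (fun n => sq_nonneg _)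
    (tendsto_cesaroMean_norm_sq_orthogonalProjectionOnto K (fun n => (hy n).le) h)
  refine ⟨S, hS, ?_⟩
  have hr : 0 ≤ r := hy 0 ▸ norm_nonneg _
  have hsqrt := (tendsto_const_nhds (x := r ^ 2)).sub hlim |>.sqrt
  rw [sub_zero, Real.sqrt_sq hr] at hsqrt
  refine hsqrt.congr fun n => ?_
  rw [← hy n, ← norm_sub_orthogonalProjectionOnto_sq, Real.sqrt_sq (norm_nonneg _)]

end Projection

section Koopman

variable {Ω : Type*} [MeasurableSpace Ω] {μ : Measure Ω} {f : Ω → Ω}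

lemma pow_apply_eq_compMeasurePreserving_iterate {𝕜 E : Type*} [NormedRing 𝕜]
    [NormedAddCommGroup E] [Module 𝕜 E] [IsBoundedSMul 𝕜 E] {p : ENNReal} [Fact (1 ≤ p)]
    (hf : MeasurePreserving f μ μ) {U : Lp E p μ →L[𝕜] Lp E p μ}
    (hU : ∀ ψ : Lp E p μ, (U ψ : Ω → E) =ᵐ[μ] fun ω => ψ (f ω)) (n : ℕ) (ψ : Lp E p μ) :
    (U ^ n) ψ = Lp.compMeasurePreserving f^[n] (hf.iterate n) ψ := by
  have hU' : ⇑U = Lp.compMeasurePreserving f hf :=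
    funext fun ψ => Lp.ext ((hU ψ).trans (Lp.coeFn_compMeasurePreserving ψ hf).symm)
  rw [FunLike.coe_pow_eq_iterate, hU', Lp.compMeasurePreserving_iterate]

variable {𝕜 : Type*} [RCLike 𝕜]

lemma inner_compMeasurePreserving (hf : MeasurePreserving f μ μ) (β ψ : Lp 𝕜 2 μ) :
    ⟪β, Lp.compMeasurePreserving f hf ψ⟫_𝕜 = ∫ ω, ψ (f ω) * starRingEnd 𝕜 (β ω) ∂μ := by
  rw [L2.inner_def]
  refine integral_congr_ae ?_
  filter_upwards [Lp.coeFn_compMeasurePreserving ψ hf] with ω hω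
  rw [RCLike.inner_apply, hω, Function.comp_apply]

variable [IsFiniteMeasure μ]

lemma compMeasurePreserving_toLp_const (hf : MeasurePreserving f μ μ) (c : 𝕜) :
    Lp.compMeasurePreserving f hf (MemLp.toLp (fun _ => c) (memLp_const c) : Lp 𝕜 2 μ) =
      MemLp.toLp (fun _ => c) (memLp_const c) :=
  rfl

lemma inner_toLp_const_one (β : Lp 𝕜 2 μ) :
    ⟪β, MemLp.toLp (fun _ => (1 : 𝕜)) (memLp_const 1)⟫_𝕜 = starRingEnd 𝕜 (∫ ω, β ω ∂μ) := by
  rw [L2.inner_def, ← integral_conj]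
  refine integral_congr_ae ?_
  filter_upwards [MemLp.coeFn_toLp (memLp_const (1 : 𝕜) : MemLp _ 2 μ)] with ω hω
  rw [RCLike.inner_apply, hω, one_mul]

lemma toLp_const_eq_smul_toLp_const_one (c : 𝕜) :
    (MemLp.toLp (fun _ => c) (memLp_const c) : Lp 𝕜 2 μ) =
      c • MemLp.toLp (fun _ => (1 : 𝕜)) (memLp_const 1) := by
  rw [← MemLp.toLp_const_smul]
  congr
  exact funext fun _ => (mul_one c).symm

end Koopman

/-- **Direct forecast error for weakly mixing systems.**
If `f` is weakly mixing (Cesàro decay of correlations), then for any finite-dimensional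
hypothesis space `W` containing the constants, the direct-forecast error
`‖U^n φ - π_W U^n φ‖` converges, along a set of times of density one, to the variance
`‖φ - ∫ φ dμ‖`. -/
theorem direct_forecast_error_weak_mixing
    {Ω : Type*} [MeasurableSpace Ω] (μ : Measure Ω) [IsProbabilityMeasure μ]
    (f : Ω → Ω) (hf : MeasurePreserving f μ μ)
    (hmix : ∀ α β : Lp ℂ 2 μ,
      Tendsto (fun N : ℕ =>
        (∑ n ∈ Finset.range N,
          ‖(∫ ω, α (f^[n] ω) * (starRingEnd ℂ) (β ω) ∂μ) -
            (∫ ω, α ω ∂μ) * (starRingEnd ℂ) (∫ ω, β ω ∂μ)‖) / (N : ℝ)) atTop (𝓝 0))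
    (U : Lp ℂ 2 μ →L[ℂ] Lp ℂ 2 μ)
    (hU : ∀ ψ : Lp ℂ 2 μ, (U ψ : Ω → ℂ) =ᵐ[μ] fun ω => ψ (f ω))
    (W : Submodule ℂ (Lp ℂ 2 μ)) [FiniteDimensional ℂ W]
    (hWconst : (MemLp.toLp (fun _ => (1 : ℂ)) (memLp_const 1)) ∈ W)
    (φ : Lp ℂ 2 μ) :
    ∃ S : Set ℕ, hasDensityOne S ∧
      Tendsto (fun n : ℕ => ‖(U ^ n) φ - (Submodule.orthogonalProjectionOnto W ((U ^ n) φ) : Lp ℂ 2 μ)‖)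
        (atTop ⊓ Filter.principal S)
        (𝓝 ‖φ - MemLp.toLp (fun _ => ∫ ω, φ ω ∂μ) (memLp_const _)‖) := by
  set one : Lp ℂ 2 μ := MemLp.toLp (fun _ => (1 : ℂ)) (memLp_const 1)
  set c := ∫ ω, φ ω ∂μ
  have hUn := pow_apply_eq_compMeasurePreserving_iterate hf hU
  have hUone (n : ℕ) : (U ^ n) one = one := by
    rw [hUn]
    exact compMeasurePreserving_toLp_const _ 1
  have hsplit (n : ℕ) : (U ^ n) φ = (U ^ n) (φ - c • one) + c • one := by
    rw [map_sub, map_smul, hUone, sub_add_cancel]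
  have hcorr (w : Lp ℂ 2 μ) :
      Tendsto (cesaroMean fun n => ‖⟪w, (U ^ n) (φ - c • one)⟫_ℂ‖) atTop (𝓝 0) := by
    have hinner (n : ℕ) : ⟪w, (U ^ n) (φ - c • one)⟫_ℂ =
        (∫ ω, φ (f^[n] ω) * starRingEnd ℂ (w ω) ∂μ) - c * starRingEnd ℂ (∫ ω, w ω ∂μ) := by
      rw [map_sub, map_smul, hUone, inner_sub_right, inner_smul_right, inner_toLp_const_one, hUn,
        inner_compMeasurePreserving]
    simp_rw [hinner]
    exact hmix φ w
  obtain ⟨S, hS, hlim⟩ := exists_hasDensityOne_tendsto_norm_sub_orthogonalProjectionOnto W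
    (fun n => by rw [hUn, Lp.norm_compMeasurePreserving]) fun w _ => hcorr w
  refine ⟨S, hS, ?_⟩
  rw [toLp_const_eq_smul_toLp_const_one]
  refine hlim.congr fun n => ?_
  rw [hsplit, sub_orthogonalProjectionOnto_add_of_mem W _ (W.smul_mem c hWconst)]
end

section
/- Let (Ω, μ) be a probability space and f : Ω → Ω a measure-preserving transformation that is strongly mixing in the sense that for all α, β ∈ L²(μ; ℂ), ⟨α∘f^n, β⟩ → (∫α dμ)(conj ∫β dμ) as n → ∞. Let U be the Koopman operator Uψ = ψ∘f on L²(μ; ℂ), W a finite-dimensional subspace of L²(μ; ℂ) containing the constant functions, and π_W the orthogonal projection onto W. Then for every φ ∈ L²(μ; ℂ), lim_{n → ∞} ‖U^n φ − π_W U^n φ‖ = ‖φ − ∫φ dμ‖_{L²(μ)} (the limit holds along the full sequence of natural numbers). -/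
open MeasureTheory Filter Topology
open scoped InnerProductSpace ComplexConjugate

/-!
Strong mixing says precisely that `U^n φ` converges weakly to the constant `∫ φ dμ`. The
projection onto a finite-dimensional `W` is a finite sum `∑ ⟪bᵢ, ·⟫ bᵢ`, so it turns weak
convergence into norm convergence: `π_W U^n φ → ∫ φ dμ`, which lies in `W`. Since `U` is an
isometry, Pythagoras gives `‖U^n φ - π_W U^n φ‖² = ‖φ‖² - ‖π_W U^n φ‖² → ‖φ‖² - |∫ φ dμ|²`,
and this is `‖φ - ∫ φ dμ‖²` because `φ - ∫ φ dμ` is orthogonal to the constants.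
-/

section Projection

variable {𝕜 E ι : Type*} [RCLike 𝕜] [NormedAddCommGroup E] [InnerProductSpace 𝕜 E]
  {K : Submodule 𝕜 E}

theorem Submodule.norm_sub_starProjection_sq [K.HasOrthogonalProjection] (x : E) :
    ‖x - K.starProjection x‖ ^ 2 = ‖x‖ ^ 2 - ‖K.starProjection x‖ ^ 2 := by
  rw [norm_sq_eq_add_norm_sq_starProjection x K, starProjection_orthogonal_val]
  ring

variable [FiniteDimensional 𝕜 K] {l : Filter ι} {x : ι → E} {y : E}

theorem Submodule.tendsto_starProjection_of_tendsto_inner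
    (h : ∀ v ∈ K, Tendsto (fun i => ⟪v, x i⟫_𝕜) l (𝓝 ⟪v, y⟫_𝕜)) :
    Tendsto (fun i => K.starProjection (x i)) l (𝓝 (K.starProjection y)) := by
  let b := stdOrthonormalBasis 𝕜 K
  simp only [b.starProjection_eq_sum_rankOne, sum_apply, InnerProductSpace.rankOne_apply]
  exact tendsto_finsetSum _ fun i _ => (h _ (b i).2).smul_const _

theorem Submodule.tendsto_norm_sub_starProjection_of_tendsto_inner {r : ℝ}
    (hnorm : Tendsto (fun i => ‖x i‖) l (𝓝 r))
    (h : ∀ v ∈ K, Tendsto (fun i => ⟪v, x i⟫_𝕜) l (𝓝 ⟪v, y⟫_𝕜)) (hy : y ∈ K) :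
    Tendsto (fun i => ‖x i - K.starProjection (x i)‖) l (𝓝 √(r ^ 2 - ‖y‖ ^ 2)) := by
  have hproj := (K.tendsto_starProjection_of_tendsto_inner h).norm
  rw [K.starProjection_eq_self_iff.mpr hy] at hproj
  have herr (i : ι) :
      ‖x i - K.starProjection (x i)‖ = √(‖x i‖ ^ 2 - ‖K.starProjection (x i)‖ ^ 2) := by
    rw [← K.norm_sub_starProjection_sq, Real.sqrt_sq (norm_nonneg _)]
  simpa only [herr] using ((hnorm.pow 2).sub (hproj.pow 2)).sqrt

end Projection

namespace MeasureTheory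

variable {α 𝕜 E : Type*} [MeasurableSpace α] {μ : Measure α} {p : ENNReal}

section Koopman

variable [Fact (1 ≤ p)] [RCLike 𝕜] [NormedAddCommGroup E] [NormedSpace 𝕜 E] {f : α → α}
  {U : Lp E p μ →L[𝕜] Lp E p μ}

theorem Lp.pow_apply_eq_compMeasurePreserving_of_ae_eq_comp (hf : MeasurePreserving f μ μ)
    (hU : ∀ ψ : Lp E p μ, (U ψ : α → E) =ᵐ[μ] fun ω => ψ (f ω)) (n : ℕ) (ψ : Lp E p μ) :
    (U ^ n) ψ = Lp.compMeasurePreserving f^[n] (hf.iterate n) ψ := by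
  have hUf : ⇑U = Lp.compMeasurePreserving f hf :=
    funext fun ψ => Lp.ext ((hU ψ).trans (Lp.coeFn_compMeasurePreserving ψ hf).symm)
  rw [← Lp.compMeasurePreserving_iterate hf, pow_apply_eq_iterate, hUf]

end Koopman

section L2

variable [RCLike 𝕜]

theorem L2.inner_eq_integral_mul_conj (β g : Lp 𝕜 2 μ) :
    ⟪β, g⟫_𝕜 = ∫ ω, g ω * conj (β ω) ∂μ := by
  simp only [L2.inner_def, RCLike.inner_apply]

variable [IsFiniteMeasure μ]

theorem L2.inner_const_left [NormedAddCommGroup E] [InnerProductSpace 𝕜 E] [CompleteSpace E]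
    [NormedSpace ℝ E] (c : E) (g : Lp E 2 μ) :
    ⟪Lp.const 2 μ c, g⟫_𝕜 = ⟪c, ∫ ω, g ω ∂μ⟫_𝕜 := by
  rw [← indicatorConstLp_univ, L2.inner_indicatorConstLp_eq_inner_setIntegral,
    Measure.restrict_univ]

theorem L2.inner_const_right (β : Lp 𝕜 2 μ) (c : 𝕜) :
    ⟪β, Lp.const 2 μ c⟫_𝕜 = c * conj (∫ ω, β ω ∂μ) := by
  rw [← inner_conj_symm, L2.inner_const_left, RCLike.inner_apply, map_mul, RCLike.conj_conj,
    mul_comm]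

variable [IsProbabilityMeasure μ]

theorem Lp.integral_const [NormedAddCommGroup E] [NormedSpace ℝ E] [CompleteSpace E] (c : E) :
    ∫ ω, Lp.const p μ c ω ∂μ = c := by
  rw [integral_congr_ae (Lp.coeFn_const p μ c)]
  simp

theorem Lp.norm_const_of_isProbabilityMeasure [NormedAddCommGroup E] (hp : p ≠ 0) (c : E) :
    ‖Lp.const p μ c‖ = ‖c‖ := by
  simp [Lp.norm_const _ _ _ hp]

theorem L2.norm_sub_const_integral_sq (g : Lp 𝕜 2 μ) :
    ‖g - Lp.const 2 μ (∫ ω, g ω ∂μ)‖ ^ 2 = ‖g‖ ^ 2 - ‖∫ ω, g ω ∂μ‖ ^ 2 := by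
  set C := Lp.const 2 μ (∫ ω, g ω ∂μ)
  have horth : ⟪C, g - C⟫_𝕜 = 0 := by
    rw [inner_sub_right, L2.inner_const_left, L2.inner_const_left, Lp.integral_const, sub_self]
  have := norm_add_sq_eq_norm_sq_add_norm_sq_of_inner_eq_zero C (g - C) horth
  rw [add_sub_cancel, ← sq, ← sq, ← sq, Lp.norm_const_of_isProbabilityMeasure two_ne_zero] at this
  linarith

end L2

end MeasureTheory

/-- **Direct forecast error for strongly mixing systems.**
If `f` is strongly mixing (decay of correlations along the full sequence of times), then for
any finite-dimensional hypothesis space `W` containing the constants, the direct-forecast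
error `‖U^n φ - π_W U^n φ‖` converges (along all of `ℕ`) to the variance `‖φ - ∫ φ dμ‖`. -/
theorem direct_forecast_error_strong_mixing
    {Ω : Type*} [MeasurableSpace Ω] (μ : Measure Ω) [IsProbabilityMeasure μ]
    (f : Ω → Ω) (hf : MeasurePreserving f μ μ)
    (hmix : ∀ α β : Lp ℂ 2 μ,
      Tendsto (fun n : ℕ => ∫ ω, α (f^[n] ω) * (starRingEnd ℂ) (β ω) ∂μ) atTop
        (𝓝 ((∫ ω, α ω ∂μ) * (starRingEnd ℂ) (∫ ω, β ω ∂μ))))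
    (U : Lp ℂ 2 μ →L[ℂ] Lp ℂ 2 μ)
    (hU : ∀ ψ : Lp ℂ 2 μ, (U ψ : Ω → ℂ) =ᵐ[μ] fun ω => ψ (f ω))
    (W : Submodule ℂ (Lp ℂ 2 μ)) [FiniteDimensional ℂ W]
    (hWconst : (MemLp.toLp (fun _ => (1 : ℂ)) (memLp_const 1)) ∈ W)
    (φ : Lp ℂ 2 μ) :
    Tendsto (fun n : ℕ => ‖(U ^ n) φ - (W.orthogonalProjection ((U ^ n) φ) : Lp ℂ 2 μ)‖)
      atTop (𝓝 ‖φ - MemLp.toLp (fun _ => ∫ ω, φ ω ∂μ) (memLp_const _)‖) := by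
  have hUn := Lp.pow_apply_eq_compMeasurePreserving_of_ae_eq_comp hf hU
  set c := ∫ ω, φ ω ∂μ
  have hmean : Lp.const 2 μ c ∈ W := by
    have : Lp.const 2 μ c = c • Lp.const 2 μ (1 : ℂ) := by
      simpa using map_smul (Lp.constₗ 2 μ ℂ) c (1 : ℂ)
    exact this ▸ W.smul_mem c hWconst
  have hweak (β : Lp ℂ 2 μ) :
      Tendsto (fun n => ⟪β, (U ^ n) φ⟫_ℂ) atTop (𝓝 ⟪β, Lp.const 2 μ c⟫_ℂ) := by
    rw [L2.inner_const_right]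
    refine (hmix φ β).congr fun n => ?_
    rw [L2.inner_eq_integral_mul_conj, hUn]
    refine integral_congr_ae ?_
    filter_upwards [Lp.coeFn_compMeasurePreserving φ (hf.iterate n)] with ω hω
    rw [hω, Function.comp_apply]
  have hnorm : Tendsto (fun n => ‖(U ^ n) φ‖) atTop (𝓝 ‖φ‖) := by
    simp only [hUn, Lp.norm_compMeasurePreserving, tendsto_const_nhds]
  have hlim := W.tendsto_norm_sub_starProjection_of_tendsto_inner hnorm (fun β _ => hweak β) hmean
  rwa [Lp.norm_const_of_isProbabilityMeasure two_ne_zero, ← L2.norm_sub_const_integral_sq,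
    Real.sqrt_sq (norm_nonneg _)] at hlim
end

section
/- Let a : ℕ → ℝ be a bounded sequence with a_n ≥ 0 for all n. Then the following are equivalent: (1) lim_{N→∞} (1/N) ∑_{n=0}^{N−1} a_n = 0; (2) there exists a set S ⊆ ℕ of natural density 1 such that a_n → 0 along S, i.e. for every ε > 0 the set {n ∈ S : a_n ≥ ε} is finite. -/
open Filter Topology

/-! Both conditions are equivalent to: for every `ε > 0` the set `{n | ε ≤ a n}` has density
zero. For the Cesàro means this is Markov's inequality `ε · 1{ε ≤ a n} ≤ a n` in one direction
and `a n ≤ ε + B · 1{ε ≤ a n}` in the other. To pass from the density-zero sets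
`E k = {n | 1 / (k + 1) ≤ a n}` to a single exceptional set, choose `φ` strictly increasing with
`E k` of relative density at most `1 / (k + 1)` beyond `φ k`, and take `F = ⋃ k, E k ∩ [φ k, ∞)`:
each `E k \ F` lies below `φ k`, and since the `E k` increase, `F` lies inside `E k` below
`φ (k + 1)`, so its relative density at such times is at most `1 / (k + 1)`. -/

theorem tendsto_div_natCast_nhds_zero_iff {s : ℕ → ℝ} (hs : ∀ N, 0 ≤ s N) :
    Tendsto (fun N : ℕ => s N / N) atTop (𝓝 0) ↔
      ∀ ε : ℝ, 0 < ε → ∀ᶠ N : ℕ in atTop, s N ≤ ε * N := by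
  constructor
  · intro h ε hε
    filter_upwards [h.eventually (ge_mem_nhds hε), eventually_gt_atTop 0] with N hN hN0
    rwa [div_le_iff₀ (by positivity)] at hN
  · intro h
    refine tendsto_order.2
      ⟨fun b hb => .of_forall fun N => hb.trans_le (div_nonneg (hs N) N.cast_nonneg),
        fun b hb => ?_⟩
    filter_upwards [h (b / 2) (half_pos hb), eventually_gt_atTop 0] with N hN hN0
    have hN0' : (0 : ℝ) < N := by exact_mod_cast hN0
    rw [div_lt_iff₀ hN0']
    nlinarith

theorem StrictMono.exists_le_lt_succ {φ : ℕ → ℕ} (hφ : StrictMono φ) {K N : ℕ}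
    (hN : φ K ≤ N) : ∃ k, K ≤ k ∧ φ k ≤ N ∧ N < φ (k + 1) := by
  by_contra! h
  have hle : ∀ k, K ≤ k → φ k ≤ N := fun k hk => Nat.le_induction hN (fun j hj => h j hj) k hk
  have hKN : K ≤ N + 1 := (hφ.id_le K).trans (hN.trans N.le_succ)
  exact (hle (N + 1) hKN).not_gt (N.lt_succ_self.trans_le (hφ.id_le _))

noncomputable def countBelow (E : Set ℕ) (N : ℕ) : ℝ :=
  ∑ n ∈ Finset.range N, E.indicator (fun _ => (1 : ℝ)) n

def IsDensityZero (E : Set ℕ) : Prop :=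
  Tendsto (fun N : ℕ => countBelow E N / N) atTop (𝓝 0)

section countBelow

variable {E E' : Set ℕ} {N : ℕ}

theorem countBelow_nonneg : 0 ≤ countBelow E N :=
  Finset.sum_nonneg fun _ _ => Set.indicator_nonneg (fun _ _ => zero_le_one) _

theorem countBelow_le_of_inter_Iio_subset (h : E ∩ Set.Iio N ⊆ E') :
    countBelow E N ≤ countBelow E' N :=
  Finset.sum_le_sum fun n hn => by
    by_cases hE : n ∈ E
    · simp [hE, h ⟨hE, Finset.mem_range.1 hn⟩]
    · simp [hE, Set.indicator_nonneg]

theorem countBelow_union_le : countBelow (E ∪ E') N ≤ countBelow E N + countBelow E' N := by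
  rw [countBelow, countBelow, countBelow, ← Finset.sum_add_distrib]
  refine Finset.sum_le_sum fun n _ => ?_
  rw [← Set.indicator_union_add_inter_apply]
  exact le_add_of_nonneg_right (Set.indicator_nonneg (fun _ _ => zero_le_one) _)

theorem countBelow_add_countBelow_compl : countBelow E N + countBelow Eᶜ N = N := by
  simp [countBelow, ← Finset.sum_add_distrib, Set.indicator_self_add_compl_apply]

theorem Set.Finite.countBelow_le (hE : E.Finite) : countBelow E N ≤ hE.toFinset.card := by
  calc countBelow E N ≤ ∑ n ∈ Finset.range N ∪ hE.toFinset, E.indicator (fun _ => (1 : ℝ)) n :=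
        Finset.sum_le_sum_of_subset_of_nonneg Finset.subset_union_left
          fun _ _ _ => Set.indicator_nonneg (fun _ _ => zero_le_one) _
    _ = ∑ n ∈ Finset.range N ∪ hE.toFinset,
          (hE.toFinset : Set ℕ).indicator (fun _ => (1 : ℝ)) n := by
        rw [hE.coe_toFinset]
    _ = hE.toFinset.card := by
        rw [Finset.sum_indicator_subset _ Finset.subset_union_right]
        simp

end countBelow

section IsDensityZero

variable {E E' : Set ℕ}

theorem isDensityZero_iff :
    IsDensityZero E ↔ ∀ ε : ℝ, 0 < ε → ∀ᶠ N : ℕ in atTop, countBelow E N ≤ ε * N :=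
  tendsto_div_natCast_nhds_zero_iff fun _ => countBelow_nonneg

theorem hasDensityOne_iff_isDensityZero_compl : hasDensityOne E ↔ IsDensityZero Eᶜ := by
  have hcompl : ∀ᶠ N : ℕ in atTop, countBelow E N / N = 1 - countBelow Eᶜ N / N := by
    filter_upwards [eventually_ne_atTop 0] with N hN
    rw [eq_sub_iff_add_eq, ← add_div, countBelow_add_countBelow_compl,
      div_self (by exact_mod_cast hN)]
  change Tendsto (fun N : ℕ => countBelow E N / N) atTop (𝓝 1) ↔ _
  rw [tendsto_congr' hcompl]
  constructor
  · intro h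
    simpa [IsDensityZero] using (tendsto_const_nhds (x := (1 : ℝ))).sub h
  · intro h
    simpa using (tendsto_const_nhds (x := (1 : ℝ))).sub h

theorem IsDensityZero.union (hE : IsDensityZero E) (hE' : IsDensityZero E') :
    IsDensityZero (E ∪ E') := by
  refine isDensityZero_iff.2 fun ε hε => ?_
  filter_upwards [isDensityZero_iff.1 hE (ε / 2) (half_pos hε),
    isDensityZero_iff.1 hE' (ε / 2) (half_pos hε)] with N hN hN'
  linarith [countBelow_union_le (E := E) (E' := E') (N := N)]

theorem Set.Finite.isDensityZero (hE : E.Finite) : IsDensityZero E := by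
  refine isDensityZero_iff.2 fun ε hε => ?_
  filter_upwards [(tendsto_natCast_atTop_atTop.const_mul_atTop hε).eventually_ge_atTop
    (hE.toFinset.card : ℝ)] with N hN
  exact hE.countBelow_le.trans hN

theorem IsDensityZero.mono (hE' : IsDensityZero E') (h : E ⊆ E') : IsDensityZero E := by
  refine isDensityZero_iff.2 fun ε hε => ?_
  filter_upwards [isDensityZero_iff.1 hE' ε hε] with N hN
  exact (countBelow_le_of_inter_Iio_subset (Set.inter_subset_left.trans h)).trans hN

theorem exists_isDensityZero_forall_diff_finite (E : ℕ → Set ℕ) (hmono : Monotone E)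
    (hE : ∀ k, IsDensityZero (E k)) : ∃ F, IsDensityZero F ∧ ∀ k, (E k \ F).Finite := by
  obtain ⟨φ, hφ, hφE⟩ := extraction_forall_of_eventually fun k =>
    eventually_forall_ge_atTop.2 (isDensityZero_iff.1 (hE k) (1 / ((k : ℝ) + 1)) (by positivity))
  refine ⟨{n | ∃ k, φ k ≤ n ∧ n ∈ E k}, isDensityZero_iff.2 fun ε hε => ?_, fun k => ?_⟩
  · obtain ⟨K, hK⟩ := exists_nat_one_div_lt hε
    filter_upwards [eventually_ge_atTop (φ K)] with N hN
    obtain ⟨k, hKk, hkN, hNk⟩ := hφ.exists_le_lt_succ hN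
    have hFE : {n | ∃ k, φ k ≤ n ∧ n ∈ E k} ∩ Set.Iio N ⊆ E k := by
      rintro n ⟨⟨j, hjn, hj⟩, hnN : n < N⟩
      exact hmono (Nat.lt_succ_iff.1 (hφ.lt_iff_lt.1 (hjn.trans_lt (hnN.trans hNk)))) hj
    have hkK : 1 / ((k : ℝ) + 1) ≤ ε := le_trans (by gcongr) hK.le
    calc countBelow _ N ≤ countBelow (E k) N := countBelow_le_of_inter_Iio_subset hFE
      _ ≤ 1 / ((k : ℝ) + 1) * N := hφE k N hkN
      _ ≤ ε * N := by gcongr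
  · exact (Set.finite_Iio (φ k)).subset fun n ⟨hn, hnF⟩ => not_le.1 fun h => hnF ⟨k, h, hn⟩

end IsDensityZero

section Sequence

variable {a : ℕ → ℝ}

theorem isDensityZero_setOf_le_of_tendsto_cesaro (hpos : ∀ n, 0 ≤ a n)
    (ha : Tendsto (fun N : ℕ => (∑ n ∈ Finset.range N, a n) / N) atTop (𝓝 0))
    {ε : ℝ} (hε : 0 < ε) : IsDensityZero {n | ε ≤ a n} := by
  have hmarkov : ∀ N, ε * countBelow {n | ε ≤ a n} N ≤ ∑ n ∈ Finset.range N, a n := by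
    intro N
    rw [countBelow, Finset.mul_sum]
    refine Finset.sum_le_sum fun n _ => ?_
    by_cases hn : ε ≤ a n
    · simp [hn]
    · simp [hn, hpos n]
  refine isDensityZero_iff.2 fun δ hδ => ?_
  filter_upwards [(tendsto_div_natCast_nhds_zero_iff
    fun N => Finset.sum_nonneg fun n _ => hpos n).1 ha (ε * δ) (by positivity)] with N hN
  have := (hmarkov N).trans hN
  rw [mul_assoc] at this
  exact le_of_mul_le_mul_left this hε

theorem tendsto_cesaro_of_forall_isDensityZero {B : ℝ} (hB : ∀ n, a n ≤ B)
    (hpos : ∀ n, 0 ≤ a n) (ha : ∀ ε : ℝ, 0 < ε → IsDensityZero {n | ε ≤ a n}) :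
    Tendsto (fun N : ℕ => (∑ n ∈ Finset.range N, a n) / N) atTop (𝓝 0) := by
  have hB0 : 0 ≤ B := (hpos 0).trans (hB 0)
  refine (tendsto_div_natCast_nhds_zero_iff
    fun N => Finset.sum_nonneg fun n _ => hpos n).2 fun ε hε => ?_
  have hsplit : ∀ N,
      ∑ n ∈ Finset.range N, a n ≤ ε / 2 * N + B * countBelow {n | ε / 2 ≤ a n} N := by
    intro N
    calc ∑ n ∈ Finset.range N, a n
        ≤ ∑ n ∈ Finset.range N,
            (ε / 2 + B * {n | ε / 2 ≤ a n}.indicator (fun _ => (1 : ℝ)) n) := by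
          refine Finset.sum_le_sum fun n _ => ?_
          by_cases hn : ε / 2 ≤ a n
          · simp only [Set.mem_ofPred_eq, hn, Set.indicator_of_mem, mul_one]
            linarith [hB n]
          · simp only [Set.mem_ofPred_eq, hn, not_false_eq_true, Set.indicator_of_notMem,
              mul_zero, add_zero]
            linarith
      _ = ε / 2 * N + B * countBelow {n | ε / 2 ≤ a n} N := by
          simp [countBelow, Finset.sum_add_distrib, Finset.mul_sum, mul_comm]
  filter_upwards
    [isDensityZero_iff.1 (ha (ε / 2) (half_pos hε)) (ε / 2 / (B + 1)) (by positivity)] with N hN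
  have hBε : B * (ε / 2 / (B + 1)) ≤ ε / 2 := by
    rw [mul_div_assoc', div_le_iff₀ (by positivity)]
    nlinarith
  calc ∑ n ∈ Finset.range N, a n
      ≤ ε / 2 * N + B * countBelow {n | ε / 2 ≤ a n} N := hsplit N
    _ ≤ ε / 2 * N + B * (ε / 2 / (B + 1) * N) := by gcongr
    _ ≤ ε * N := by nlinarith [(N.cast_nonneg : (0 : ℝ) ≤ N)]

theorem forall_isDensityZero_iff_exists_hasDensityOne :
    (∀ ε : ℝ, 0 < ε → IsDensityZero {n | ε ≤ a n}) ↔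
      ∃ S : Set ℕ, hasDensityOne S ∧ ∀ ε : ℝ, 0 < ε → {n : ℕ | n ∈ S ∧ ε ≤ a n}.Finite := by
  constructor
  · intro ha
    have hmono : Monotone fun k : ℕ => {n | 1 / ((k : ℝ) + 1) ≤ a n} := by
      intro k l hkl n (hn : 1 / ((k : ℝ) + 1) ≤ a n)
      exact le_trans (by gcongr) hn
    obtain ⟨F, hF, hfin⟩ := exists_isDensityZero_forall_diff_finite _ hmono
      fun k => ha _ (by positivity)
    refine ⟨Fᶜ, hasDensityOne_iff_isDensityZero_compl.2 (by rwa [compl_compl]), fun ε hε => ?_⟩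
    obtain ⟨k, hk⟩ := exists_nat_one_div_lt hε
    exact (hfin k).subset fun n ⟨hnF, hn⟩ => ⟨hk.le.trans hn, hnF⟩
  · rintro ⟨S, hS, hfin⟩ ε hε
    refine ((hasDensityOne_iff_isDensityZero_compl.1 hS).union (hfin ε hε).isDensityZero).mono
      fun n hn => ?_
    by_cases hnS : n ∈ S
    · exact Or.inr ⟨hnS, hn⟩
    · exact Or.inl hnS

end Sequence

/-- **Koopman–von Neumann lemma.**
For a bounded nonnegative sequence `a`, Cesàro convergence to `0` is equivalent to
convergence to `0` along a set of times of natural density one (in the sense that, for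
every `ε > 0`, only finitely many times in the set have `a n ≥ ε`). -/
theorem koopman_von_neumann (a : ℕ → ℝ) (hbd : ∃ B : ℝ, ∀ n, a n ≤ B)
    (hpos : ∀ n, 0 ≤ a n) :
    Tendsto (fun N : ℕ => (∑ n ∈ Finset.range N, a n) / (N : ℝ)) atTop (𝓝 0) ↔
      ∃ S : Set ℕ, hasDensityOne S ∧
        ∀ ε : ℝ, 0 < ε → {n : ℕ | n ∈ S ∧ ε ≤ a n}.Finite := by
  obtain ⟨B, hB⟩ := hbd
  have hcesaro := Iff.intro (fun ha ε hε => isDensityZero_setOf_le_of_tendsto_cesaro hpos ha hε)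
    (tendsto_cesaro_of_forall_isDensityZero hB hpos)
  exact hcesaro.trans forall_isDensityZero_iff_exists_hasDensityOne
end

section
/- Let M be a metric space, f : M → M a continuous map, and 𝒰 ⊆ M an open set whose closure K := cl(𝒰) is compact and nonempty, such that f(K) ⊆ 𝒰. Define X := ⋂_{n ≥ 0} f^n(K). Then X is a nonempty compact set with f(X) = X and X ⊆ 𝒰, and X attracts K: for every open set V with X ⊆ V there exists N ∈ ℕ such that f^n(K) ⊆ V for all n ≥ N. -/
/-!
Since `f(K) ⊆ K`, the sets `fⁿ(K)` form a decreasing sequence of nonempty compact sets, so their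
intersection is nonempty and compact, and every open set containing it already contains some
`fⁿ(K)`. Invariance `f(X) = X` holds because images commute with decreasing intersections of
compact sets: the fibres over a point of `⋂ f(fⁿ(K))` are again decreasing, nonempty and compact.
-/

open Set

theorem Set.MapsTo.antitone_iterate_image {X : Type*} {f : X → X} {K : Set X}
    (h : MapsTo f K K) : Antitone fun n ↦ f^[n] '' K :=
  antitone_nat_of_succ_le fun n ↦ by
    rw [Function.iterate_succ, image_comp]
    exact image_mono h.image_subset

theorem Continuous.image_iInter_of_directed_isCompact {X Y ι : Type*} [TopologicalSpace X]
    [TopologicalSpace Y] [T2Space X] [T1Space Y] [Nonempty ι] {f : X → Y} (hf : Continuous f)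
    {K : ι → Set X} (hd : Directed (· ⊇ ·) K) (hK : ∀ i, IsCompact (K i)) :
    f '' ⋂ i, K i = ⋂ i, f '' K i := by
  refine (image_iInter_subset K f).antisymm fun y hy ↦ ?_
  have hfibre_compact : ∀ i, IsCompact (K i ∩ f ⁻¹' {y}) := fun i ↦
    (hK i).inter_right (isClosed_singleton.preimage hf)
  have hfibre_ne : ∀ i, (K i ∩ f ⁻¹' {y}).Nonempty := fun i ↦ by
    obtain ⟨x, hx, rfl⟩ := mem_iInter.1 hy i
    exact ⟨x, hx, rfl⟩
  obtain ⟨x, hx⟩ := IsCompact.nonempty_iInter_of_directed_nonempty_isCompact_isClosed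
    (fun i ↦ K i ∩ f ⁻¹' {y}) (fun i j ↦ (hd i j).imp fun _ hk ↦
      ⟨inter_subset_inter_left _ hk.1, inter_subset_inter_left _ hk.2⟩) hfibre_ne hfibre_compact
    fun i ↦ (hfibre_compact i).isClosed
  rw [← iInter_inter] at hx
  exact ⟨x, hx.1, hx.2⟩

section

variable {X : Type*} [TopologicalSpace X] [T2Space X] {f : X → X} {K : Set X}

theorem isCompact_iInter_iterate_image (hf : Continuous f) (hK : IsCompact K) :
    IsCompact (⋂ n : ℕ, f^[n] '' K) :=
  hK.of_isClosed_subset (isClosed_iInter fun n ↦ (hK.image (hf.iterate n)).isClosed)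
    (iInter_subset_of_subset 0 (by simp))

theorem nonempty_iInter_iterate_image (hf : Continuous f) (hK : IsCompact K) (hne : K.Nonempty)
    (h : MapsTo f K K) : (⋂ n : ℕ, f^[n] '' K).Nonempty :=
  IsCompact.nonempty_iInter_of_directed_nonempty_isCompact_isClosed _
    h.antitone_iterate_image.directed_ge (fun _ ↦ hne.image _)
    (fun n ↦ hK.image (hf.iterate n)) fun n ↦ (hK.image (hf.iterate n)).isClosed

theorem image_iInter_iterate_image (hf : Continuous f) (hK : IsCompact K) (h : MapsTo f K K) :
    f '' ⋂ n : ℕ, f^[n] '' K = ⋂ n : ℕ, f^[n] '' K := by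
  rw [hf.image_iInter_of_directed_isCompact h.antitone_iterate_image.directed_ge
    fun n ↦ hK.image (hf.iterate n)]
  simp_rw [← image_comp, ← Function.iterate_succ']
  exact h.antitone_iterate_image.iInter_nat_add 1

theorem exists_iterate_image_subset_of_iInter_subset (hf : Continuous f) (hK : IsCompact K)
    (h : MapsTo f K K) {V : Set X} (hV : IsOpen V) (hKV : ⋂ n : ℕ, f^[n] '' K ⊆ V) :
    ∃ N, ∀ n ≥ N, f^[n] '' K ⊆ V := by
  obtain ⟨N, hN⟩ := exists_subset_nhds_of_isCompact h.antitone_iterate_image.directed_ge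
    (fun n ↦ hK.image (hf.iterate n)) fun x hx ↦ hV.mem_nhds (hKV hx)
  exact ⟨N, fun n hn ↦ (h.antitone_iterate_image hn).trans hN⟩

end

theorem attractor_of_nested_images_general
    {M : Type*} [MetricSpace M] (f : M → M) (hf : Continuous f)
    (𝒰 : Set M)
    (hK : IsCompact (closure 𝒰)) (hKne : (closure 𝒰).Nonempty)
    (hfK : f '' closure 𝒰 ⊆ 𝒰) :
    (⋂ n : ℕ, f^[n] '' closure 𝒰).Nonempty ∧
    IsCompact (⋂ n : ℕ, f^[n] '' closure 𝒰) ∧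
    f '' (⋂ n : ℕ, f^[n] '' closure 𝒰) = ⋂ n : ℕ, f^[n] '' closure 𝒰 ∧
    (⋂ n : ℕ, f^[n] '' closure 𝒰) ⊆ 𝒰 ∧
    ∀ V : Set M, IsOpen V → (⋂ n : ℕ, f^[n] '' closure 𝒰) ⊆ V →
      ∃ N : ℕ, ∀ n ≥ N, f^[n] '' closure 𝒰 ⊆ V := by
  have hmaps : MapsTo f (closure 𝒰) (closure 𝒰) :=
    mapsTo_iff_image_subset.2 (hfK.trans subset_closure)
  have hsub : (⋂ n : ℕ, f^[n] '' closure 𝒰) ⊆ 𝒰 :=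
    (iInter_subset _ 1).trans (by simpa using hfK)
  exact ⟨nonempty_iInter_iterate_image hf hK hKne hmaps, isCompact_iInter_iterate_image hf hK,
    image_iInter_iterate_image hf hK hmaps, hsub,
    fun V hV ↦ exists_iterate_image_subset_of_iInter_subset hf hK hmaps hV⟩

/-- **The attractor as a nested intersection of forward images.**
If the closure `K` of an open set `𝒰` is compact and nonempty and `f(K) ⊆ 𝒰`, then
`X = ⋂_{n ≥ 0} f^n(K)` is a nonempty compact set with `f(X) = X` and `X ⊆ 𝒰`, and `X`
attracts `K`: every open neighborhood `V` of `X` contains `f^n(K)` for all large `n`. -/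
theorem attractor_of_nested_images
    {M : Type*} [MetricSpace M] (f : M → M) (hf : Continuous f)
    (𝒰 : Set M) (h𝒰 : IsOpen 𝒰)
    (hK : IsCompact (closure 𝒰)) (hKne : (closure 𝒰).Nonempty)
    (hfK : f '' closure 𝒰 ⊆ 𝒰) :
    (⋂ n : ℕ, f^[n] '' closure 𝒰).Nonempty ∧
    IsCompact (⋂ n : ℕ, f^[n] '' closure 𝒰) ∧
    f '' (⋂ n : ℕ, f^[n] '' closure 𝒰) = ⋂ n : ℕ, f^[n] '' closure 𝒰 ∧
    (⋂ n : ℕ, f^[n] '' closure 𝒰) ⊆ 𝒰 ∧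
    ∀ V : Set M, IsOpen V → (⋂ n : ℕ, f^[n] '' closure 𝒰) ⊆ V →
      ∃ N : ℕ, ∀ n ≥ N, f^[n] '' closure 𝒰 ⊆ V :=
  attractor_of_nested_images_general f hf 𝒰 hK hKne hfK
end
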